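/- arXiv:2503.18920 — 3 statements merged into one kernel-verified Lean document; each statement's English description precedes it below -/
import Mathlib

section
/- For every integer n ≥ 1, if a set of vertices A of the cycle C_n is good, then A is a maximizer of the Wiener index W on C_n. -/
open SimpleGraph Finset

/-- The cycle graph on vertex set `ZMod n`, with an edge between `i` and `i+1` (mod `n`). -/
def cycleGraphZMod (n : ℕ) : SimpleGraph (ZMod n) :=
  SimpleGraph.fromRel (fun u v => v = u + 1)

/-- The Wiener index of a set of vertices: the sum of all pairwise geodesic distances. -/
noncomputable def wienerSet {V : Type*} [Fintype V] [DecidableEq V]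
    (G : SimpleGraph V) (A : Finset V) : ℕ :=
  (∑ p ∈ A.offDiag, G.dist p.1 p.2) / 2

/-- `A` is a maximizer of `W` on `G`. -/
def IsWienerMaximizer {V : Type*} [Fintype V] [DecidableEq V]
    (G : SimpleGraph V) (A : Finset V) : Prop :=
  ∀ B : Finset V, B.card = A.card → wienerSet G B ≤ wienerSet G A

/-- `A ⊆ V(C_n)` is almost good. -/
def AlmostGood (n : ℕ) (A : Finset (ZMod n)) : Prop :=
  A.card = 1 ∨ A.card = n - 1 ∨
    ∃ c₁ c₂ : ((cycleGraphZMod n).induce (↑A : Set (ZMod n))).ConnectedComponent,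
      c₁ ≠ c₂ ∧ (∀ c, c = c₁ ∨ c = c₂) ∧
      (c₁.supp.ncard : ℤ) - (c₂.supp.ncard : ℤ) ≤ 1 ∧
      (c₂.supp.ncard : ℤ) - (c₁.supp.ncard : ℤ) ≤ 1

/-- `A ⊆ V(C_n)` is good: both `A` and its complement are almost good. -/
def GoodSet (n : ℕ) [NeZero n] (A : Finset (ZMod n)) : Prop :=
  AlmostGood n A ∧ AlmostGood n (Finset.univ \ A)

/-- The color class of color `i` for the coloring `f`. -/
def colorClass {V : Type*} [Fintype V] {k : ℕ} (f : V → Fin k) (i : Fin k) : Finset V :=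
  Finset.univ.filter (fun v => f v = i)

/-- The Wiener index of a coloring: the sum of the Wiener indices of its color classes. -/
noncomputable def wienerColoring {V : Type*} [Fintype V] [DecidableEq V] {k : ℕ}
    (G : SimpleGraph V) (f : V → Fin k) : ℕ :=
  ∑ i : Fin k, wienerSet G (colorClass f i)

/-- The type of a coloring, as the multiset of cardinalities of its color classes
(equality of multisets is equality of the nondecreasing rearrangements). -/
def colorType {V : Type*} [Fintype V] {k : ℕ} (f : V → Fin k) : Multiset ℕ :=
  (Finset.univ : Finset (Fin k)).val.map (fun i => (colorClass f i).card)

/-- `f` is a `k`-color weak maximizer of `W` on `G`. -/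
def IsWeakMaximizer {V : Type*} [Fintype V] [DecidableEq V] {k : ℕ}
    (G : SimpleGraph V) (f : V → Fin k) : Prop :=
  Function.Surjective f ∧ ∀ g : V → Fin k, Function.Surjective g →
    colorType g = colorType f → wienerColoring G g ≤ wienerColoring G f

/-- The coloring obtained from `f` by swapping the colors of `u` and `v`. -/
def swapColors {V α : Type*} [DecidableEq V] (f : V → α) (u v : V) : V → α :=
  f ∘ Equiv.swap u v

/-- `f` is a `k`-color local weak maximizer of `W` on `G`. -/
def IsLocalWeakMaximizer {V : Type*} [Fintype V] [DecidableEq V] {k : ℕ}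
    (G : SimpleGraph V) (f : V → Fin k) : Prop :=
  Function.Surjective f ∧ ∀ u v : V, G.Adj u v →
    wienerColoring G (swapColors f u v) ≤ wienerColoring G f

/-- The number of vertices to the left of `u` in the path that get the same color as `u`. -/
def leftCount {n k : ℕ} (f : Fin n → Fin k) (u : Fin n) : ℕ :=
  (Finset.univ.filter (fun w => w < u ∧ f w = f u)).card

/-- The number of vertices to the right of `u` in the path that get the same color as `u`. -/
def rightCount {n k : ℕ} (f : Fin n → Fin k) (u : Fin n) : ℕ :=
  (Finset.univ.filter (fun w => u < w ∧ f w = f u)).card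

/-- The sum of the `j` largest entries of a multiset of naturals. -/
def sumLargest (s : Multiset ℕ) (j : ℕ) : ℕ :=
  (((s.sort (· ≤ ·)).reverse).take j).sum

/-- `x ≺ y` : `x` is majorized by `y`. -/
def MajorizedBy (x y : Multiset ℕ) : Prop :=
  x.card = y.card ∧ x.sum = y.sum ∧ ∀ j, sumLargest x j ≤ sumLargest y j

/-- The reverse Robin Hood transfer `R_{j,j'}` applied to the (sorted) list `t`,
with `j ≤ j'` zero-indexed: subtract `1` from the `j`-th entry and add `1` to the `j'`-th
entry; the result is recorded as a multiset (i.e. up to rearrangement). -/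
def rhTransfer (t : List ℕ) (j j' : ℕ) : Multiset ℕ :=
  ↑((t.set j (t.getD j 0 - 1)).set j' ((t.set j (t.getD j 0 - 1)).getD j' 0 + 1))

/-- `t(n,k)` : the unique nondecreasing `k`-tuple of positive integers summing to `n`
whose entries pairwise differ by at most one, as a multiset. -/
def equitableType (n k : ℕ) : Multiset ℕ :=
  Multiset.replicate (k - n % k) (n / k) + Multiset.replicate (n % k) (n / k + 1)

/-- One step of the operation `R`: `s ∈ R({t})`, i.e. `s = t` or `s` is obtained from `t` by
a reverse Robin Hood transfer between two entries that are equal and even. -/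
def REstep (t s : Multiset ℕ) : Prop :=
  s = t ∨ ∃ m : ℕ, Even m ∧ 2 ≤ t.count m ∧
    s = (t - Multiset.replicate 2 m) + {m - 1, m + 1}

/-- `s ∈ R^∞({t(n,k)})`. -/
def InRInfty (n k : ℕ) (s : Multiset ℕ) : Prop :=
  Relation.ReflTransGen REstep (equitableType n k) s


section AuxGoodMaximizer
set_option linter.unusedSectionVars false

variable {n : ℕ} [NeZero n]

lemma zmod_cast_val (x : ZMod n) : ((x.val : ℕ) : ZMod n) = x :=
  ZMod.natCast_rightInverse x

lemma cyc_adj {x y : ZMod n} : (cycleGraphZMod n).Adj x y ↔ x ≠ y ∧ (y = x + 1 ∨ x = y + 1) := by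
  simp [cycleGraphZMod]


lemma card_filter_zmod (t : ZMod n) (P : ℕ → Prop) [DecidablePred P] :
    ((univ : Finset (ZMod n)).filter (fun x => P ((x - t).val))).card
      = ((Finset.range n).filter P).card := by
  apply Finset.card_bij' (fun x _ => (x - t).val) (fun j _ => (j : ZMod n) + t)
  · intro x hx
    simp only [mem_filter, mem_range] at *
    exact ⟨ZMod.val_lt _, hx.2⟩
  · intro j hj
    simp only [mem_filter, mem_range] at *
    have h : ((j : ZMod n) + t - t) = (j : ZMod n) := by ring
    rw [h, ZMod.val_cast_of_lt hj.1]
    exact ⟨mem_univ _, hj.2⟩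
  · intro x hx
    rw [zmod_cast_val]; ring
  · intro j hj
    simp only [mem_filter, mem_range] at hj
    have h : ((j : ZMod n) + t - t) = (j : ZMod n) := by ring
    rw [h, ZMod.val_cast_of_lt hj.1]

lemma card_filter_zmod' (t : ZMod n) (P : ℕ → Prop) [DecidablePred P] :
    ((univ : Finset (ZMod n)).filter (fun x => P ((t - x).val))).card
      = ((Finset.range n).filter P).card := by
  apply Finset.card_bij' (fun x _ => (t - x).val) (fun j _ => t - (j : ZMod n))
  · intro x hx
    simp only [mem_filter, mem_range] at *
    exact ⟨ZMod.val_lt _, hx.2⟩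
  · intro j hj
    simp only [mem_filter, mem_range] at *
    have h : (t - (t - (j : ZMod n))) = (j : ZMod n) := by ring
    rw [h, ZMod.val_cast_of_lt hj.1]
    exact ⟨mem_univ _, hj.2⟩
  · intro x hx
    rw [zmod_cast_val]; ring
  · intro j hj
    simp only [mem_filter, mem_range] at hj
    have h : (t - (t - (j : ZMod n))) = (j : ZMod n) := by ring
    rw [h, ZMod.val_cast_of_lt hj.1]

lemma sum_ind {α : Type*} {s : Finset α} (P : α → Prop) [DecidablePred P] :
    ∑ x ∈ s, (if P x then (1:ℕ) else 0) = (s.filter P).card :=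
  (Finset.card_filter P s).symm

lemma cyc_adj_succ (hn : 2 ≤ n) (x : ZMod n) : (cycleGraphZMod n).Adj x (x + 1) := by
  rw [cyc_adj]
  haveI : Fact (1 < n) := ⟨hn⟩
  refine ⟨fun h => ?_, Or.inl rfl⟩
  have : (1 : ZMod n) = 0 := by linear_combination -h
  exact one_ne_zero this

/-- walk upper bound -/
lemma cyc_walk_exists (hn : 2 ≤ n) (u : ZMod n) (k : ℕ) :
    ∃ w : (cycleGraphZMod n).Walk u (u + (k : ℕ)), w.length = k := by
  induction k with
  | zero =>
    have h : u = u + ((0:ℕ) : ZMod n) := by norm_num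
    exact ⟨(Walk.nil : (cycleGraphZMod n).Walk u u).copy rfl h, by simp⟩
  | succ k ih =>
    obtain ⟨w, hw⟩ := ih
    have hadj : (cycleGraphZMod n).Adj (u + (k:ℕ)) (u + ((k+1 : ℕ) : ZMod n)) := by
      have : ((k+1 : ℕ) : ZMod n) = (k : ℕ) + 1 := by push_cast; ring
      rw [this, ← add_assoc]
      exact cyc_adj_succ hn _
    exact ⟨w.concat hadj, by simp [hw]⟩

lemma cyc_dist_le (hn : 2 ≤ n) (u : ZMod n) (k : ℕ) :
    (cycleGraphZMod n).dist u (u + (k : ℕ)) ≤ k := by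
  obtain ⟨w, hw⟩ := cyc_walk_exists hn u k
  calc (cycleGraphZMod n).dist u (u + (k:ℕ)) ≤ w.length := SimpleGraph.dist_le w
  _ = k := hw

lemma cyc_walk_ge (hn : 2 ≤ n) {u v : ZMod n} (w : (cycleGraphZMod n).Walk u v) :
    min (v - u).val (n - (v - u).val) ≤ w.length := by
  induction w with
  | nil => simp
  | @cons a b c hadj p ih =>
    rw [cyc_adj] at hadj
    have hb : (c - b).val < n := ZMod.val_lt _
    have ha : (c - a).val < n := ZMod.val_lt _
    rcases hadj.2 with h1 | h1
    · -- b = a + 1, so c - a = (c - b) + 1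
      have : c - a = (c - b) + ((1:ℕ) : ZMod n) := by rw [h1]; push_cast; ring
      have hv : (c - a).val = ((c - b).val + 1) % n := by
        rw [this, ZMod.val_add, ZMod.val_natCast, Nat.add_mod ((c-b).val) 1 n,
          Nat.mod_eq_of_lt hb]
      have hv' : (c - a).val = (c - b).val + 1 ∨ ((c-b).val + 1 = n ∧ (c - a).val = 0) := by
        rcases Nat.lt_or_ge ((c-b).val + 1) n with hc | hc
        · left; rw [hv, Nat.mod_eq_of_lt hc]
        · right
          have he : (c-b).val + 1 = n := by omega
          constructor
          · exact he
          · rw [hv, he, Nat.mod_self]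
      simp only [Walk.length_cons]
      omega
    · -- a = b + 1, so c - a = (c - b) - 1, i.e. (c-b) + (n-1)
      have : c - a = (c - b) + ((n - 1 : ℕ) : ZMod n) := by
        rw [h1]
        have : ((n - 1 : ℕ) : ZMod n) = -1 := by
          have h2 : ((n : ℕ) : ZMod n) = 0 := ZMod.natCast_self n
          have : ((n - 1 : ℕ) : ZMod n) = (n : ℕ) - 1 := by
            push_cast [Nat.cast_sub (by omega : 1 ≤ n)]; ring
          rw [this, h2]; ring
        rw [this]; ring
      have hv : (c - a).val = ((c - b).val + (n - 1)) % n := by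
        rw [this, ZMod.val_add, ZMod.val_natCast, Nat.add_mod ((c-b).val) (n-1) n,
          Nat.mod_eq_of_lt hb, Nat.mod_eq_of_lt (by omega : n - 1 < n)]
      have hv' : ((c-b).val = 0 ∧ (c - a).val = n - 1) ∨ (c - a).val = (c - b).val - 1 := by
        rcases Nat.eq_zero_or_pos ((c-b).val) with hc | hc
        · left
          refine ⟨hc, ?_⟩
          rw [hv, hc, Nat.zero_add, Nat.mod_eq_of_lt (by omega)]
        · right
          rw [hv, Nat.mod_eq_sub_mod (by omega), Nat.mod_eq_of_lt (by omega)]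
          omega
      simp only [Walk.length_cons]
      omega

lemma cyc_dist_eq (hn : 2 ≤ n) (u v : ZMod n) :
    (cycleGraphZMod n).dist u v = min (v - u).val (n - (v - u).val) := by
  set r := (v - u).val with hr
  have hrn : r < n := ZMod.val_lt _
  have hvu : u + (r : ℕ) = v := by rw [hr, zmod_cast_val]; ring
  apply le_antisymm
  · rcases Nat.le_total r (n - r) with h | h
    · rw [min_eq_left h, ← hvu]; exact cyc_dist_le hn u r
    · rw [min_eq_right h]
      rcases Nat.eq_zero_or_pos r with h0 | h0
      · have : v = u := by rw [← hvu, h0]; simp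
        simp [this, SimpleGraph.dist_self]
      · have huv : v + ((n - r : ℕ) : ZMod n) = u := by
          have : ((n - r : ℕ) : ZMod n) = -(r : ℕ) := by
            have : ((n:ℕ) : ZMod n) = 0 := ZMod.natCast_self n
            push_cast [Nat.cast_sub (le_of_lt hrn)]
            rw [this]; ring
          rw [this, hr, zmod_cast_val]; ring
        rw [SimpleGraph.dist_comm, ← huv]
        exact cyc_dist_le hn v (n - r)
  · have hreach : (cycleGraphZMod n).Reachable u v := by
      obtain ⟨w, _⟩ := cyc_walk_exists hn u r
      rw [hvu] at w
      exact w.reachable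
    obtain ⟨w, hw⟩ := hreach.exists_walk_length_eq_dist
    rw [← hw]
    exact cyc_walk_ge hn w

/-- arithmetic form of the window-cut identity -/
lemma count_xor_range (hn : 2 ≤ n) {r : ℕ} (hr : r < n) :
    ((Finset.range n).filter (fun j => ¬((j < n/2) ↔ ((j + r) % n < n/2)))).card
      = 2 * min r (n - r) := by
  set h := n / 2 with hh
  have hn2 : n = 2*h ∨ n = 2*h + 1 := by omega
  rcases Nat.eq_zero_or_pos r with h0 | h0
  · subst h0
    have : ((Finset.range n).filter (fun j => ¬((j < h) ↔ ((j + 0) % n < h)))) = ∅ := by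
      apply Finset.filter_false_of_mem
      intro j hj
      rw [Finset.mem_range] at hj
      rw [Nat.add_zero, Nat.mod_eq_of_lt hj]
      tauto
    rw [this]; simp
  rcases Nat.le_total (2*r) n with hc | hc
  · -- small r : set = Ico (h-r) h ∪ Ico (n-r) n
    have hset : ((Finset.range n).filter (fun j => ¬((j < h) ↔ ((j + r) % n < h))))
        = Finset.Ico (h - r) h ∪ Finset.Ico (n - r) n := by
      ext j
      simp only [Finset.mem_filter, Finset.mem_range, Finset.mem_union, Finset.mem_Ico]
      constructor
      · rintro ⟨hj, hcond⟩
        have hmlt : (j + r) % n < n := Nat.mod_lt _ (by omega)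
        have hm : (j + r) % n = j + r ∨ (j + r) % n + n = j + r := by
          rcases Nat.lt_or_ge (j + r) n with hx | hx
          · left; exact Nat.mod_eq_of_lt hx
          · right; rw [Nat.mod_eq_sub_mod hx, Nat.mod_eq_of_lt (by omega)]; omega
        omega
      · intro hj
        have hjr : j < n := by omega
        have hmlt : (j + r) % n < n := Nat.mod_lt _ (by omega)
        have hm : (j + r) % n = j + r ∨ (j + r) % n + n = j + r := by
          rcases Nat.lt_or_ge (j + r) n with hx | hx
          · left; exact Nat.mod_eq_of_lt hx
          · right; rw [Nat.mod_eq_sub_mod hx, Nat.mod_eq_of_lt (by omega)]; omega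
        exact ⟨hjr, by omega⟩
    rw [hset, Finset.card_union_of_disjoint, Nat.card_Ico, Nat.card_Ico]
    · omega
    · rw [Finset.disjoint_left]
      intro j hj1 hj2
      simp only [Finset.mem_Ico] at *
      omega
  · -- large r : set = Ico 0 (n-r) ∪ Ico h (h + (n-r))
    have hset : ((Finset.range n).filter (fun j => ¬((j < h) ↔ ((j + r) % n < h))))
        = Finset.Ico 0 (n - r) ∪ Finset.Ico h (h + (n - r)) := by
      ext j
      simp only [Finset.mem_filter, Finset.mem_range, Finset.mem_union, Finset.mem_Ico]
      constructor
      · rintro ⟨hj, hcond⟩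
        have hmlt : (j + r) % n < n := Nat.mod_lt _ (by omega)
        have hm : (j + r) % n = j + r ∨ (j + r) % n + n = j + r := by
          rcases Nat.lt_or_ge (j + r) n with hx | hx
          · left; exact Nat.mod_eq_of_lt hx
          · right; rw [Nat.mod_eq_sub_mod hx, Nat.mod_eq_of_lt (by omega)]; omega
        omega
      · intro hj
        have hjr : j < n := by omega
        have hmlt : (j + r) % n < n := Nat.mod_lt _ (by omega)
        have hm : (j + r) % n = j + r ∨ (j + r) % n + n = j + r := by
          rcases Nat.lt_or_ge (j + r) n with hx | hx
          · left; exact Nat.mod_eq_of_lt hx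
          · right; rw [Nat.mod_eq_sub_mod hx, Nat.mod_eq_of_lt (by omega)]; omega
        exact ⟨hjr, by omega⟩
    rw [hset, Finset.card_union_of_disjoint, Nat.card_Ico, Nat.card_Ico]
    · omega
    · rw [Finset.disjoint_left]
      intro j hj1 hj2
      simp only [Finset.mem_Ico] at *
      omega

/-- 2 * dist = number of half-windows separating u and v -/
lemma two_mul_dist (hn : 2 ≤ n) (u v : ZMod n) :
    2 * (cycleGraphZMod n).dist u v
      = ((univ : Finset (ZMod n)).filter
          (fun i => ¬(((u - i).val < n/2) ↔ ((v - i).val < n/2)))).card := by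
  obtain ⟨r, hr⟩ : ∃ r, (v - u).val = r := ⟨_, rfl⟩
  have hrn : r < n := hr ▸ ZMod.val_lt _
  have hcard : ((univ : Finset (ZMod n)).filter
        (fun i => ¬(((u - i).val < n/2) ↔ ((v - i).val < n/2)))).card
      = ((Finset.range n).filter (fun j => ¬((j < n/2) ↔ ((j + r) % n < n/2)))).card := by
    apply Finset.card_bij' (fun i _ => (u - i).val) (fun j _ => u - (j : ZMod n))
    · intro i hi
      simp only [Finset.mem_filter, Finset.mem_range, Finset.mem_univ, true_and] at *
      refine ⟨ZMod.val_lt _, ?_⟩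
      have he : v - i = (v - u) + (u - i) := by ring
      have hv : (v - i).val = ((u - i).val + r) % n := by
        rw [he, ZMod.val_add, hr, Nat.add_comm]
      rw [← hv]; exact hi
    · intro j hj
      simp only [Finset.mem_filter, Finset.mem_range, Finset.mem_univ, true_and] at *
      have h1 : (u - (u - (j : ZMod n))).val = j := by
        have he : u - (u - (j : ZMod n)) = (j : ZMod n) := by ring
        rw [he, ZMod.val_cast_of_lt hj.1]
      have h2 : (v - (u - (j : ZMod n))).val = (j + r) % n := by
        have he : v - (u - (j : ZMod n)) = (v - u) + (j : ZMod n) := by ring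
        rw [he, ZMod.val_add, hr, ZMod.val_cast_of_lt hj.1, Nat.add_comm]
      rw [h1, h2]; exact hj.2
    · intro i _
      rw [zmod_cast_val]; ring
    · intro j hj
      simp only [Finset.mem_filter, Finset.mem_range] at hj
      have he : u - (u - (j : ZMod n)) = (j : ZMod n) := by ring
      rw [he, ZMod.val_cast_of_lt hj.1]
  rw [hcard, count_xor_range hn hrn, cyc_dist_eq hn u v, hr]

/-- window count -/
def wcount (B : Finset (ZMod n)) (i : ZMod n) : ℕ :=
  (B.filter (fun u => (u - i).val < n/2)).card

lemma wcount_le (B : Finset (ZMod n)) (i : ZMod n) : wcount B i ≤ B.card :=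
  Finset.card_filter_le _ _

/-- each vertex lies in exactly n/2 windows -/
lemma card_windows (u : ZMod n) :
    ((univ : Finset (ZMod n)).filter (fun i => (u - i).val < n/2)).card = n/2 := by
  rw [card_filter_zmod' (n := n) u (fun j => j < n/2)]
  have h : (Finset.range n).filter (fun j => j < n/2) = Finset.range (n/2) := by
    ext j
    simp only [Finset.mem_filter, Finset.mem_range]
    omega
  rw [h, Finset.card_range]

lemma sum_wcount (B : Finset (ZMod n)) :
    ∑ i : ZMod n, wcount B i = B.card * (n/2) := by
  unfold wcount
  have h1 : ∀ i : ZMod n, (B.filter (fun u => (u - i).val < n/2)).card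
      = ∑ u ∈ B, (if (u - i).val < n/2 then 1 else 0) := by
    intro i; rw [sum_ind]
  simp only [h1]
  rw [Finset.sum_comm]
  have h2 : ∀ u ∈ B, ∑ i : ZMod n, (if (u - i).val < n/2 then 1 else 0) = n/2 := by
    intro u _
    rw [sum_ind]
    exact card_windows u
  rw [Finset.sum_congr rfl h2, Finset.sum_const, smul_eq_mul]

lemma sum_dist_eq (hn : 2 ≤ n) (B : Finset (ZMod n)) :
    ∑ p ∈ B ×ˢ B, (cycleGraphZMod n).dist p.1 p.2
      = ∑ i : ZMod n, wcount B i * (B.card - wcount B i) := by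
  have key : 2 * ∑ p ∈ B ×ˢ B, (cycleGraphZMod n).dist p.1 p.2
      = 2 * ∑ i : ZMod n, wcount B i * (B.card - wcount B i) := by
    calc 2 * ∑ p ∈ B ×ˢ B, (cycleGraphZMod n).dist p.1 p.2
        = ∑ p ∈ B ×ˢ B, 2 * (cycleGraphZMod n).dist p.1 p.2 := Finset.mul_sum _ _ _
      _ = ∑ p ∈ B ×ˢ B, ∑ i : ZMod n,
            (if ¬(((p.1 - i).val < n/2) ↔ ((p.2 - i).val < n/2)) then 1 else 0) := by
          apply Finset.sum_congr rfl
          intro p _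
          rw [two_mul_dist hn p.1 p.2, sum_ind]
      _ = ∑ i : ZMod n, ∑ p ∈ B ×ˢ B,
            (if ¬(((p.1 - i).val < n/2) ↔ ((p.2 - i).val < n/2)) then 1 else 0) :=
          Finset.sum_comm
      _ = ∑ i : ZMod n, 2 * (wcount B i * (B.card - wcount B i)) := by
          apply Finset.sum_congr rfl
          intro i _
          rw [Finset.sum_product]
          have h2 : (B.filter (fun u => ¬((u - i).val < n/2))).card = B.card - wcount B i := by
            have := Finset.card_filter_add_card_filter_not
              (s := B) (p := fun u => (u - i).val < n/2)
            unfold wcount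
            omega
          have hsplit : ∀ u ∈ B, (∑ v ∈ B,
              (if ¬(((u - i).val < n/2) ↔ ((v - i).val < n/2)) then 1 else 0))
              = if (u - i).val < n/2 then B.card - wcount B i else wcount B i := by
            intro u _
            by_cases hu : (u - i).val < n/2
            · rw [if_pos hu, sum_ind]
              have h : B.filter (fun v => ¬(((u - i).val < n/2) ↔ ((v - i).val < n/2)))
                  = B.filter (fun v => ¬((v - i).val < n/2)) := by
                apply Finset.filter_congr; intro v _; simp [hu]
              rw [h, h2]
            · rw [if_neg hu, sum_ind]
              have h : B.filter (fun v => ¬(((u - i).val < n/2) ↔ ((v - i).val < n/2)))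
                  = B.filter (fun v => (v - i).val < n/2) := by
                apply Finset.filter_congr; intro v _; simp [hu]
              rw [h]
              rfl
          rw [Finset.sum_congr rfl hsplit, Finset.sum_ite, Finset.sum_const, Finset.sum_const]
          simp only [smul_eq_mul]
          have h1 : (B.filter (fun u => (u - i).val < n/2)).card = wcount B i := rfl
          rw [h1, h2]
          ring
      _ = 2 * ∑ i : ZMod n, wcount B i * (B.card - wcount B i) := (Finset.mul_sum _ _ _).symm
  omega

lemma sum_offDiag_dist (B : Finset (ZMod n)) :
    ∑ p ∈ B.offDiag, (cycleGraphZMod n).dist p.1 p.2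
      = ∑ p ∈ B ×ˢ B, (cycleGraphZMod n).dist p.1 p.2 := by
  apply Finset.sum_subset
  · intro p hp
    rw [Finset.mem_offDiag] at hp
    rw [Finset.mem_product]
    exact ⟨hp.1, hp.2.1⟩
  · intro p hp hnp
    rw [Finset.mem_product] at hp
    rw [Finset.mem_offDiag] at hnp
    have : p.1 = p.2 := by
      by_contra h
      exact hnp ⟨hp.1, hp.2, h⟩
    rw [this, SimpleGraph.dist_self]

lemma maximizer_of_balanced (hn : 2 ≤ n) (A : Finset (ZMod n)) (c : ℕ)
    (hbal : ∀ i : ZMod n, wcount A i = c ∨ wcount A i = c + 1) :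
    IsWienerMaximizer (cycleGraphZMod n) A := by
  intro B hB
  unfold wienerSet
  apply Nat.div_le_div_right
  rw [sum_offDiag_dist, sum_offDiag_dist, sum_dist_eq hn, sum_dist_eq hn, hB]
  have hcast : ∀ (C : Finset (ZMod n)), C.card = A.card →
      ((∑ i : ZMod n, wcount C i * (A.card - wcount C i) : ℕ) : ℤ)
        = ∑ i : ZMod n, (wcount C i : ℤ) * ((A.card : ℤ) - (wcount C i : ℤ)) := by
    intro C hC
    rw [Nat.cast_sum]
    apply Finset.sum_congr rfl
    intro i _
    rw [Nat.cast_mul, Nat.cast_sub (hC ▸ wcount_le C i)]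
  have hsum : (∑ i : ZMod n, (wcount B i : ℤ)) = ∑ i : ZMod n, (wcount A i : ℤ) := by
    rw [← Nat.cast_sum, ← Nat.cast_sum, sum_wcount, sum_wcount, hB]
  have hcons : ∀ w c : ℤ, 0 ≤ (w - c) * (w - c - 1) := by
    intro w c
    rcases le_or_gt w c with h | h
    · nlinarith [h]
    · exact mul_nonneg (by omega) (by omega)
  set K : ℤ := (c:ℤ) * ((A.card : ℤ) - c) with hK
  set D : ℤ := (A.card : ℤ) - 2*c - 1 with hD
  have hZ : (∑ i : ZMod n, (wcount B i : ℤ) * ((A.card : ℤ) - (wcount B i : ℤ)))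
      ≤ ∑ i : ZMod n, (wcount A i : ℤ) * ((A.card : ℤ) - (wcount A i : ℤ)) := by
    calc ∑ i : ZMod n, (wcount B i : ℤ) * ((A.card : ℤ) - (wcount B i : ℤ))
        ≤ ∑ i : ZMod n, (K + D * ((wcount B i : ℤ) - c)) := by
          apply Finset.sum_le_sum
          intro i _
          have := hcons (wcount B i : ℤ) (c : ℤ)
          nlinarith [this]
      _ = ∑ i : ZMod n, (K + D * ((wcount A i : ℤ) - c)) := by
          simp only [mul_sub, Finset.sum_add_distrib, Finset.sum_sub_distrib,
            ← Finset.mul_sum, hsum]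
      _ = ∑ i : ZMod n, (wcount A i : ℤ) * ((A.card : ℤ) - (wcount A i : ℤ)) := by
          apply Finset.sum_congr rfl
          intro i _
          rcases hbal i with h | h <;> rw [h] <;> push_cast <;> ring
  rw [← hcast B hB, ← hcast A rfl] at hZ
  exact_mod_cast hZ

lemma count_interval (h c a b : ℕ) :
    ((Finset.range h).filter (fun j => a ≤ j + c ∧ j + c < b)).card
      = min (c + h) b - max c a := by
  have hset : ((Finset.range h).filter (fun j => a ≤ j + c ∧ j + c < b))
      = Finset.Ico (max a c - c) (min b (c + h) - c) := by
    ext j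
    simp only [Finset.mem_filter, Finset.mem_range, Finset.mem_Ico]
    omega
  rw [hset, Nat.card_Ico]
  omega

lemma card_filter_zmod2 (t i : ZMod n) (P : ℕ → ℕ → Prop) [∀ a b, Decidable (P a b)] :
    ((univ : Finset (ZMod n)).filter (fun u => P ((u - t).val) ((u - i).val))).card
      = ((Finset.range n).filter (fun j => P ((j + (i - t).val) % n) j)).card := by
  apply Finset.card_bij' (fun u _ => (u - i).val) (fun j _ => (j : ZMod n) + i)
  · intro u hu
    simp only [mem_filter, mem_range, mem_univ, true_and] at *
    refine ⟨ZMod.val_lt _, ?_⟩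
    have he : u - t = (u - i) + (i - t) := by ring
    have hv : (u - t).val = ((u - i).val + (i - t).val) % n := by rw [he, ZMod.val_add]
    rw [← hv]; exact hu
  · intro j hj
    simp only [mem_filter, mem_range, mem_univ, true_and] at *
    have h1 : ((j : ZMod n) + i - i).val = j := by
      have he : (j : ZMod n) + i - i = (j : ZMod n) := by ring
      rw [he, ZMod.val_cast_of_lt hj.1]
    have h2 : ((j : ZMod n) + i - t).val = (j + (i - t).val) % n := by
      have he : (j : ZMod n) + i - t = (j : ZMod n) + (i - t) := by ring
      rw [he, ZMod.val_add, ZMod.val_cast_of_lt hj.1]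
    rw [h1, h2]; exact hj.2
  · intro u _
    rw [zmod_cast_val]; ring
  · intro j hj
    simp only [mem_filter, mem_range] at hj
    have he : (j : ZMod n) + i - i = (j : ZMod n) := by ring
    rw [he, ZMod.val_cast_of_lt hj.1]

set_option maxHeartbeats 1000000 in
/-- the key balance property: every half-window of a balanced two-arc set contains
`c` or `c+1` of its points, where `c = (m - n % 2)/2`. -/
lemma wcount_two_arc (hn : 2 ≤ n) {s1 g1 s2 g2 : ℕ} (t : ZMod n)
    (hs1 : 1 ≤ s1) (hg1 : 1 ≤ g1) (hs2 : 1 ≤ s2) (hg2 : 1 ≤ g2)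
    (hsum : n = s1 + g1 + s2 + g2)
    (hs : s1 ≤ s2 + 1 ∧ s2 ≤ s1 + 1) (hg : g1 ≤ g2 + 1 ∧ g2 ≤ g1 + 1)
    (A : Finset (ZMod n))
    (hA : A = univ.filter (fun x => (x - t).val < s1 ∨
        (s1 + g1 ≤ (x - t).val ∧ (x - t).val < s1 + g1 + s2))) :
    ∀ i : ZMod n, wcount A i = (s1 + s2 - n % 2)/2 ∨ wcount A i = (s1 + s2 - n % 2)/2 + 1 := by
  intro i
  set v2 := s1 + g1 with hv2
  set h := n / 2 with hh
  -- step 1: express as a count over range n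
  have h1 : wcount A i = ((Finset.range n).filter
      (fun j => (((j + (i - t).val) % n < s1 ∨
        (v2 ≤ (j + (i - t).val) % n ∧ (j + (i - t).val) % n < v2 + s2))) ∧ j < h)).card := by
    unfold wcount
    rw [hA, Finset.filter_filter]
    exact card_filter_zmod2 t i (fun a b => (a < s1 ∨ (v2 ≤ a ∧ a < v2 + s2)) ∧ b < h)
  obtain ⟨c, hc⟩ : ∃ c, (i - t).val = c := ⟨_, rfl⟩
  have hcn : c < n := hc ▸ ZMod.val_lt _
  rw [hc] at h1
  -- step 2: restrict to range h
  have h2 : ((Finset.range n).filter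
      (fun j => (((j + c) % n < s1 ∨ (v2 ≤ (j + c) % n ∧ (j + c) % n < v2 + s2))) ∧ j < h))
      = ((Finset.range h).filter
      (fun j => ((j + c) % n < s1 ∨ (v2 ≤ (j + c) % n ∧ (j + c) % n < v2 + s2)))) := by
    ext j
    simp only [Finset.mem_filter, Finset.mem_range]
    constructor
    · rintro ⟨_, hQ, hlt⟩; exact ⟨hlt, hQ⟩
    · rintro ⟨hlt, hQ⟩; exact ⟨lt_of_lt_of_le hlt (Nat.div_le_self n 2), hQ, hlt⟩
  rw [h2] at h1
  -- step 3: unroll the modulus into four genuine intervals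
  have h3 : ((Finset.range h).filter
      (fun j => ((j + c) % n < s1 ∨ (v2 ≤ (j + c) % n ∧ (j + c) % n < v2 + s2))))
      = ((Finset.range h).filter (fun j =>
          (0 ≤ j + c ∧ j + c < s1) ∨ (v2 ≤ j + c ∧ j + c < v2 + s2) ∨
          (n ≤ j + c ∧ j + c < n + s1) ∨ (n + v2 ≤ j + c ∧ j + c < n + v2 + s2))) := by
    apply Finset.filter_congr
    intro j hj
    rw [Finset.mem_range] at hj
    have hjh : j < h := hj
    have hmlt : (j + c) % n < n := Nat.mod_lt _ (by omega)
    have hm : (j + c) % n = j + c ∨ (j + c) % n + n = j + c := by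
      rcases Nat.lt_or_ge (j + c) n with hx | hx
      · left; exact Nat.mod_eq_of_lt hx
      · right; rw [Nat.mod_eq_sub_mod hx, Nat.mod_eq_of_lt (by omega)]; omega
    constructor
    · intro hcond; omega
    · intro hcond; omega
  rw [h3] at h1
  -- step 4: split into four interval counts
  have hsplit : ((Finset.range h).filter (fun j =>
          (0 ≤ j + c ∧ j + c < s1) ∨ (v2 ≤ j + c ∧ j + c < v2 + s2) ∨
          (n ≤ j + c ∧ j + c < n + s1) ∨ (n + v2 ≤ j + c ∧ j + c < n + v2 + s2))).card
      = (min (c + h) s1 - max c 0) + ((min (c + h) (v2 + s2) - max c v2)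
        + ((min (c + h) (n + s1) - max c n) + (min (c + h) (n + v2 + s2) - max c (n + v2)))) := by
    have hd : ∀ (P Q : ℕ → Prop) (_ : DecidablePred P) (_ : DecidablePred Q),
        (∀ j, ¬(P j ∧ Q j)) →
        ((Finset.range h).filter (fun j => P j ∨ Q j)).card
          = ((Finset.range h).filter P).card + ((Finset.range h).filter Q).card := by
      intro P Q _ _ hPQ
      rw [Finset.filter_or, Finset.card_union_of_disjoint]
      rw [Finset.disjoint_left]
      intro j hj1 hj2
      simp only [Finset.mem_filter] at *
      exact hPQ j ⟨hj1.2, hj2.2⟩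
    rw [hd _ _ _ _ (by intro j; omega), hd _ _ _ _ (by intro j; omega),
      hd _ _ _ _ (by intro j; omega)]
    rw [count_interval, count_interval, count_interval, count_interval]
  rw [hsplit] at h1
  -- step 5: pure arithmetic
  rw [h1]
  clear h1 h2 h3 hsplit hc hA
  simp only [Nat.min_def, Nat.max_def]
  split_ifs <;> omega

lemma induce_adj' {B : Finset (ZMod n)} {u v : ↥((↑B : Set (ZMod n)))} :
    ((cycleGraphZMod n).induce (↑B : Set (ZMod n))).Adj u v ↔ (cycleGraphZMod n).Adj u.1 v.1 :=
  Iff.rfl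

lemma eq_univ_of_arc_fwd {B : Finset (ZMod n)} {x : ZMod n}
    (h : ∀ j ≤ n - 1, x + (j:ℕ) ∈ B) : B = univ := by
  rw [Finset.eq_univ_iff_forall]
  intro z
  have h1 : (z - x).val ≤ n - 1 := by have := ZMod.val_lt (z - x); omega
  have h2 : x + (((z - x).val : ℕ) : ZMod n) = z := by rw [zmod_cast_val]; ring
  have := h _ h1
  rwa [h2] at this

lemma eq_univ_of_arc_bwd {B : Finset (ZMod n)} {x : ZMod n}
    (h : ∀ j ≤ n - 1, x - (j:ℕ) ∈ B) : B = univ := by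
  rw [Finset.eq_univ_iff_forall]
  intro z
  have h1 : (x - z).val ≤ n - 1 := by have := ZMod.val_lt (x - z); omega
  have h2 : x - (((x - z).val : ℕ) : ZMod n) = z := by rw [zmod_cast_val]; ring
  have := h _ h1
  rwa [h2] at this

/-- an arc inside B gives reachability in the induced graph -/
lemma reach_arc (hn : 2 ≤ n) {B : Finset (ZMod n)} {x : ZMod n} {k : ℕ}
    (harc : ∀ j ≤ k, x + (j:ℕ) ∈ B) :
    ((cycleGraphZMod n).induce (↑B : Set (ZMod n))).Reachable
      ⟨x, by simpa using harc 0 (by omega)⟩ ⟨x + (k:ℕ), by simpa using harc k le_rfl⟩ := by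
  haveI : Fact (1 < n) := ⟨hn⟩
  induction k with
  | zero =>
    have he : (⟨x + ((0:ℕ):ZMod n), by simpa using harc 0 (by omega)⟩ :
        ↥((↑B : Set (ZMod n)))) = ⟨x, by simpa using harc 0 (by omega)⟩ := by
      apply Subtype.ext; push_cast; ring
    rw [he]
  | succ k ih =>
    have harc' : ∀ j ≤ k, x + (j:ℕ) ∈ B := fun j hj => harc j (by omega)
    have h1 : ((cycleGraphZMod n).induce (↑B : Set (ZMod n))).Adj
        ⟨x + (k:ℕ), by simpa using harc k (by omega)⟩
        ⟨x + ((k+1:ℕ):ZMod n), by simpa using harc (k+1) le_rfl⟩ := by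
      rw [induce_adj', cyc_adj]
      constructor
      · intro h
        apply (one_ne_zero : (1 : ZMod n) ≠ 0)
        have h' : x + ((k:ℕ):ZMod n) = x + ((k+1:ℕ):ZMod n) := h
        push_cast at h'
        linear_combination -h'
      · left; push_cast; ring
    exact (ih harc').trans h1.reachable

/-- reachability in the induced graph gives an arc inside B -/
lemma comp_arc (hn : 2 ≤ n) {B : Finset (ZMod n)} (hBu : B ≠ univ) {x y : ZMod n}
    (hx : x ∈ B) (hy : y ∈ B)
    (hr : ((cycleGraphZMod n).induce (↑B : Set (ZMod n))).Reachable
      ⟨x, by simpa using hx⟩ ⟨y, by simpa using hy⟩) :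
    (∃ k, k < n ∧ (∀ j ≤ k, x + (j:ℕ) ∈ B) ∧ y = x + (k:ℕ)) ∨
    (∃ k, k < n ∧ (∀ j ≤ k, x - (j:ℕ) ∈ B) ∧ y = x - (k:ℕ)) := by
  suffices haux : ∀ (a b : ↥((↑B : Set (ZMod n))))
      (_ : ((cycleGraphZMod n).induce (↑B : Set (ZMod n))).Walk a b),
      (∃ k, k < n ∧ (∀ j ≤ k, a.1 + (j:ℕ) ∈ B) ∧ b.1 = a.1 + (k:ℕ)) ∨
      (∃ k, k < n ∧ (∀ j ≤ k, a.1 - (j:ℕ) ∈ B) ∧ b.1 = a.1 - (k:ℕ)) by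
    obtain ⟨w⟩ := hr
    exact haux _ _ w
  intro a b w
  induction w with
  | nil =>
    left
    refine ⟨0, by omega, ?_, by push_cast; ring⟩
    intro j hj
    have : j = 0 := by omega
    subst this
    simpa using a.2
  | @cons a a' b hadj p ih =>
    rw [induce_adj', cyc_adj] at hadj
    have ha : a.1 ∈ B := by simpa using a.2
    have ha' : a'.1 ∈ B := by simpa using a'.2
    rcases hadj.2 with hd | hd
    · -- a' = a + 1
      rcases ih with ⟨k, hk, harc, hb⟩ | ⟨k, hk, harc, hb⟩
      · -- forward from a'
        by_cases hkn : k + 1 < n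
        · left
          refine ⟨k + 1, hkn, ?_, ?_⟩
          · intro j hj
            match j with
            | 0 => simpa using ha
            | (j' + 1) =>
              have : a.1 + ((j' + 1 : ℕ) : ZMod n) = a'.1 + (j' : ℕ) := by
                rw [hd]; push_cast; ring
              rw [this]; exact harc j' (by omega)
          · rw [hb, hd]; push_cast; ring
        · exfalso
          apply hBu
          apply eq_univ_of_arc_fwd (x := a.1)
          intro j hj
          match j with
          | 0 => simpa using ha
          | (j' + 1) =>
            have : a.1 + ((j' + 1 : ℕ) : ZMod n) = a'.1 + (j' : ℕ) := by
              rw [hd]; push_cast; ring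
            rw [this]; exact harc j' (by omega)
      · -- backward from a'
        rcases Nat.eq_zero_or_pos k with hk0 | hk0
        · subst hk0
          left
          refine ⟨1, by omega, ?_, ?_⟩
          · intro j hj
            match j with
            | 0 => simpa using ha
            | 1 =>
              have : a.1 + ((1:ℕ) : ZMod n) = a'.1 := by rw [hd]; push_cast; ring
              rw [this]; exact ha'
          · rw [hb, hd]; push_cast; ring
        · right
          refine ⟨k - 1, by omega, ?_, ?_⟩
          · intro j hj
            have : a.1 - ((j:ℕ) : ZMod n) = a'.1 - ((j + 1 : ℕ) : ZMod n) := by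
              rw [hd]; push_cast; ring
            rw [this]; exact harc (j+1) (by omega)
          · rw [hb, hd]
            have hke : ((k:ℕ) : ZMod n) = ((k - 1 : ℕ) : ZMod n) + 1 := by
              conv_lhs => rw [show k = (k-1)+1 by omega]
              push_cast; ring
            rw [hke]; ring
    · -- a = a' + 1
      rcases ih with ⟨k, hk, harc, hb⟩ | ⟨k, hk, harc, hb⟩
      · -- forward from a'
        rcases Nat.eq_zero_or_pos k with hk0 | hk0
        · subst hk0
          right
          refine ⟨1, by omega, ?_, ?_⟩
          · intro j hj
            match j with
            | 0 => simpa using ha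
            | 1 =>
              have : a.1 - ((1:ℕ) : ZMod n) = a'.1 := by rw [hd]; push_cast; ring
              rw [this]; exact ha'
          · rw [hb, hd]; push_cast; ring
        · left
          refine ⟨k - 1, by omega, ?_, ?_⟩
          · intro j hj
            have : a.1 + ((j:ℕ) : ZMod n) = a'.1 + ((j + 1 : ℕ) : ZMod n) := by
              rw [hd]; push_cast; ring
            rw [this]; exact harc (j+1) (by omega)
          · rw [hb, hd]
            have hke : ((k:ℕ) : ZMod n) = ((k - 1 : ℕ) : ZMod n) + 1 := by
              conv_lhs => rw [show k = (k-1)+1 by omega]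
              push_cast; ring
            rw [hke]; ring
      · -- backward from a'
        by_cases hkn : k + 1 < n
        · right
          refine ⟨k + 1, hkn, ?_, ?_⟩
          · intro j hj
            match j with
            | 0 => simpa using ha
            | (j' + 1) =>
              have : a.1 - ((j' + 1 : ℕ) : ZMod n) = a'.1 - (j' : ℕ) := by
                rw [hd]; push_cast; ring
              rw [this]; exact harc j' (by omega)
          · rw [hb, hd]; push_cast; ring
        · exfalso
          apply hBu
          apply eq_univ_of_arc_bwd (x := a.1)
          intro j hj
          match j with
          | 0 => simpa using ha
          | (j' + 1) =>
            have : a.1 - ((j' + 1 : ℕ) : ZMod n) = a'.1 - (j' : ℕ) := by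
              rw [hd]; push_cast; ring
            rw [this]; exact harc j' (by omega)

lemma run_le (hn : 2 ≤ n) {B : Finset (ZMod n)} {x : ZMod n} {l : ℕ}
    (hxm : x - ((1:ℕ) : ZMod n) ∉ B) (harc : ∀ j ≤ l, x + (j:ℕ) ∈ B) : l ≤ n - 2 := by
  by_contra hcon
  apply hxm
  have h1 : n - 1 ≤ l := by omega
  have h2 : x + ((n - 1 : ℕ) : ZMod n) = x - ((1:ℕ) : ZMod n) := by
    have h3 : ((n - 1 : ℕ) : ZMod n) = -1 := by
      have h4 : ((n:ℕ) : ZMod n) = 0 := ZMod.natCast_self n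
      conv_lhs => rw [show ((n - 1 : ℕ) : ZMod n) = ((n:ℕ) : ZMod n) - 1 by
        push_cast [Nat.cast_sub (by omega : 1 ≤ n)]; ring]
      rw [h4]; ring
    rw [h3]; push_cast; ring
  rw [← h2]
  exact harc _ h1

/-- the support of the component of a run start is exactly the run -/
lemma comp_supp (hn : 2 ≤ n) {B : Finset (ZMod n)} (hBu : B ≠ univ) {x : ZMod n} {l : ℕ}
    (hx : x ∈ B) (hxm : x - ((1:ℕ) : ZMod n) ∉ B)
    (harc : ∀ j ≤ l, x + (j:ℕ) ∈ B) (hend : x + ((l+1:ℕ) : ZMod n) ∉ B)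
    (y : ZMod n) (hy : y ∈ B) :
    (((cycleGraphZMod n).induce (↑B : Set (ZMod n))).connectedComponentMk ⟨y, by simpa using hy⟩
      = ((cycleGraphZMod n).induce (↑B : Set (ZMod n))).connectedComponentMk ⟨x, by simpa using hx⟩)
    ↔ (y - x).val ≤ l := by
  rw [SimpleGraph.ConnectedComponent.eq]
  constructor
  · intro hr
    have := comp_arc hn hBu hx hy hr.symm
    rcases this with ⟨k, hk, harc', hb⟩ | ⟨k, hk, harc', hb⟩
    · have hkl : k ≤ l := by
        by_contra hcon
        exact hend (by
          have : x + ((l+1:ℕ) : ZMod n) ∈ B := harc' (l+1) (by omega)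
          exact this)
      have : (y - x).val = k := by
        rw [hb]
        have : x + ((k:ℕ) : ZMod n) - x = ((k:ℕ) : ZMod n) := by ring
        rw [this, ZMod.val_cast_of_lt hk]
      omega
    · rcases Nat.eq_zero_or_pos k with hk0 | hk0
      · subst hk0
        have hyx : y = x := by rw [hb]; push_cast; ring
        rw [hyx]
        simp
      · exfalso
        apply hxm
        have h1 : x - ((1:ℕ) : ZMod n) ∈ B := harc' 1 (by omega)
        exact h1
  · intro hval
    have hyx : y = x + (((y - x).val : ℕ) : ZMod n) := by rw [zmod_cast_val]; ring
    have hr := reach_arc hn (k := (y - x).val) (x := x) (B := B)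
      (fun j hj => harc j (by omega))
    have he : (⟨x + (((y - x).val : ℕ) : ZMod n), by
        simpa using harc _ hval⟩ : ↥((↑B : Set (ZMod n)))) = ⟨y, by simpa using hy⟩ := by
      apply Subtype.ext
      exact hyx.symm
    rw [he] at hr
    exact hr.symm

lemma supp_ncard (hn : 2 ≤ n) {B : Finset (ZMod n)} (hBu : B ≠ univ) {x : ZMod n} {l : ℕ}
    (hx : x ∈ B) (hxm : x - ((1:ℕ) : ZMod n) ∉ B)
    (harc : ∀ j ≤ l, x + (j:ℕ) ∈ B) (hend : x + ((l+1:ℕ) : ZMod n) ∉ B) :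
    (((cycleGraphZMod n).induce (↑B : Set (ZMod n))).connectedComponentMk
      ⟨x, by simpa using hx⟩).supp.ncard = l + 1 := by
  have hl : l ≤ n - 2 := run_le hn hxm harc
  have himg : Subtype.val '' (((cycleGraphZMod n).induce (↑B : Set (ZMod n))).connectedComponentMk
      ⟨x, by simpa using hx⟩).supp
      = ↑((univ : Finset (ZMod n)).filter (fun y => (y - x).val < l + 1)) := by
    ext y
    simp only [Set.mem_image, Finset.coe_filter, Set.mem_setOf_eq, Finset.mem_univ, true_and]
    constructor
    · rintro ⟨v, hv, rfl⟩
      rw [SimpleGraph.ConnectedComponent.mem_supp_iff] at hv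
      have hvB : v.1 ∈ B := by simpa using v.2
      have := (comp_supp hn hBu hx hxm harc hend v.1 hvB).mp (by
        convert hv using 2)
      omega
    · intro hval
      have hyB : y ∈ B := by
        have hyx : y = x + (((y - x).val : ℕ) : ZMod n) := by rw [zmod_cast_val]; ring
        rw [hyx]
        exact harc _ (by omega)
      refine ⟨⟨y, by simpa using hyB⟩, ?_, rfl⟩
      rw [SimpleGraph.ConnectedComponent.mem_supp_iff]
      exact (comp_supp hn hBu hx hxm harc hend y hyB).mpr (by omega)
  have h1 := Set.ncard_image_of_injective (((cycleGraphZMod n).induce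
      (↑B : Set (ZMod n))).connectedComponentMk ⟨x, by simpa using hx⟩).supp
      (Subtype.val_injective)
  rw [himg] at h1
  rw [← h1, Set.ncard_coe_finset]
  rw [card_filter_zmod (n := n) x (fun j => j < l + 1)]
  have h : (Finset.range n).filter (fun j => j < l + 1) = Finset.range (l+1) := by
    ext j
    simp only [Finset.mem_filter, Finset.mem_range]
    omega
  rw [h, Finset.card_range]

lemma find_run (hn : 2 ≤ n) {B : Finset (ZMod n)} {v z : ZMod n} (hv : v ∈ B) (hz : z ∉ B) :
    ∃ (x : ZMod n) (l : ℕ) (hx : x ∈ B), x - ((1:ℕ) : ZMod n) ∉ B ∧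
      (∀ j ≤ l, x + (j:ℕ) ∈ B) ∧ x + ((l+1:ℕ) : ZMod n) ∉ B ∧
      ((cycleGraphZMod n).induce (↑B : Set (ZMod n))).Reachable
        ⟨x, by simpa using hx⟩ ⟨v, by simpa using hv⟩ := by
  have hvz : v ≠ z := fun h => hz (h ▸ hv)
  -- find the start of the run containing v, walking backwards
  have hPex : ∃ j : ℕ, v - ((j+1:ℕ) : ZMod n) ∉ B := by
    refine ⟨(v - z).val - 1, ?_⟩
    have h1 : 1 ≤ (v - z).val := by
      have h2 : (v - z).val ≠ 0 := fun h => hvz (by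
        have := (ZMod.val_eq_zero _).mp h
        have h3 : v - z = 0 := this
        linear_combination h3)
      omega
    have h2 : ((v - z).val - 1 + 1 : ℕ) = (v - z).val := by omega
    rw [h2, zmod_cast_val]
    have h3 : v - (v - z) = z := by ring
    rw [h3]
    exact hz
  classical
  set k1 := Nat.find hPex with hk1def
  have hk1 : v - ((k1+1:ℕ) : ZMod n) ∉ B := Nat.find_spec hPex
  have hk1min : ∀ j < k1, v - ((j+1:ℕ) : ZMod n) ∈ B := by
    intro j hj
    have := Nat.find_min hPex hj
    simpa using this
  have hback : ∀ j ≤ k1, v - ((j:ℕ) : ZMod n) ∈ B := by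
    intro j hj
    match j with
    | 0 => simpa using hv
    | (j' + 1) => exact hk1min j' (by omega)
  set x := v - ((k1:ℕ) : ZMod n) with hxdef
  have hx : x ∈ B := hback k1 le_rfl
  have hxm : x - ((1:ℕ) : ZMod n) ∉ B := by
    have he : x - ((1:ℕ) : ZMod n) = v - ((k1+1:ℕ) : ZMod n) := by
      rw [hxdef]; push_cast; ring
    rw [he]; exact hk1
  -- find the length of the run from x
  have hzx : z ≠ x := fun h => hz (h ▸ hx)
  have hQex : ∃ j : ℕ, x + ((j+1:ℕ) : ZMod n) ∉ B := by
    refine ⟨(z - x).val - 1, ?_⟩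
    have h1 : 1 ≤ (z - x).val := by
      have h2 : (z - x).val ≠ 0 := fun h => hzx (by
        have h3 : z - x = 0 := (ZMod.val_eq_zero _).mp h
        linear_combination h3)
      omega
    have h2 : ((z - x).val - 1 + 1 : ℕ) = (z - x).val := by omega
    rw [h2, zmod_cast_val]
    have h3 : x + (z - x) = z := by ring
    rw [h3]
    exact hz
  set l := Nat.find hQex with hldef
  have hend : x + ((l+1:ℕ) : ZMod n) ∉ B := Nat.find_spec hQex
  have hlmin : ∀ j < l, x + ((j+1:ℕ) : ZMod n) ∈ B := by
    intro j hj
    have := Nat.find_min hQex hj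
    simpa using this
  have harc : ∀ j ≤ l, x + ((j:ℕ) : ZMod n) ∈ B := by
    intro j hj
    match j with
    | 0 => simpa using hx
    | (j' + 1) => exact hlmin j' (by omega)
  refine ⟨x, l, hx, hxm, harc, hend, ?_⟩
  -- reachability from x to v along the backward arc
  have harc2 : ∀ j ≤ k1, x + ((j:ℕ) : ZMod n) ∈ B := by
    intro j hj
    have he : x + ((j:ℕ) : ZMod n) = v - ((k1 - j : ℕ) : ZMod n) := by
      rw [hxdef]
      push_cast [Nat.cast_sub hj]
      ring
    rw [he]
    exact hback _ (by omega)
  have hr := reach_arc hn (B := B) (x := x) (k := k1) harc2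
  have he : (⟨x + ((k1:ℕ) : ZMod n), by simpa using harc2 k1 le_rfl⟩ :
      ↥((↑B : Set (ZMod n)))) = ⟨v, by simpa using hv⟩ := by
    apply Subtype.ext
    show x + ((k1:ℕ) : ZMod n) = v
    rw [hxdef]; ring
  rw [he] at hr
  exact hr

lemma card_two_arc {s1 v2 s2 : ℕ} (t : ZMod n) (hv : s1 ≤ v2) (hvn : v2 + s2 ≤ n) :
    ((univ : Finset (ZMod n)).filter (fun x => (x - t).val < s1 ∨
        (v2 ≤ (x - t).val ∧ (x - t).val < v2 + s2))).card = s1 + s2 := by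
  rw [card_filter_zmod (n := n) t (fun j => j < s1 ∨ (v2 ≤ j ∧ j < v2 + s2))]
  have hset : (Finset.range n).filter (fun j => j < s1 ∨ (v2 ≤ j ∧ j < v2 + s2))
      = Finset.range s1 ∪ Finset.Ico v2 (v2 + s2) := by
    ext j
    simp only [Finset.mem_filter, Finset.mem_range, Finset.mem_union, Finset.mem_Ico]
    omega
  rw [hset, Finset.card_union_of_disjoint, Finset.card_range, Nat.card_Ico]
  · omega
  · rw [Finset.disjoint_left]
    intro j hj1 hj2
    simp only [Finset.mem_range, Finset.mem_Ico] at *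
    omega

lemma extract (hn : 2 ≤ n) (A : Finset (ZMod n))
    (c₁ c₂ : ((cycleGraphZMod n).induce (↑A : Set (ZMod n))).ConnectedComponent)
    (hne : c₁ ≠ c₂) (hall : ∀ c, c = c₁ ∨ c = c₂)
    (hbal1 : (c₁.supp.ncard : ℤ) - (c₂.supp.ncard : ℤ) ≤ 1)
    (hbal2 : (c₂.supp.ncard : ℤ) - (c₁.supp.ncard : ℤ) ≤ 1)
    (hA2 : AlmostGood n (univ \ A)) :
    ∃ (t : ZMod n) (s1 g1 s2 g2 : ℕ), 1 ≤ s1 ∧ 1 ≤ g1 ∧ 1 ≤ s2 ∧ 1 ≤ g2 ∧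
      n = s1 + g1 + s2 + g2 ∧ (s1 ≤ s2 + 1 ∧ s2 ≤ s1 + 1) ∧ (g1 ≤ g2 + 1 ∧ g2 ≤ g1 + 1) ∧
      A = univ.filter (fun x => (x - t).val < s1 ∨
        (s1 + g1 ≤ (x - t).val ∧ (x - t).val < s1 + g1 + s2)) := by
  classical
  -- A is not everything
  have hAu : A ≠ univ := by
    intro hU
    have hallA : ∀ u : ZMod n, u ∈ A := by
      intro u; rw [hU]; exact mem_univ u
    apply hne
    obtain ⟨v1, hv1⟩ := c₁.exists_rep
    obtain ⟨v2, hv2⟩ := c₂.exists_rep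
    rw [← hv1, ← hv2]
    apply SimpleGraph.ConnectedComponent.sound
    have hv2m : v2.1 ∈ A := by simpa using v2.2
    have hv1m : v1.1 ∈ A := by simpa using v1.2
    have harc : ∀ j ≤ (v2.1 - v1.1).val, v1.1 + ((j:ℕ) : ZMod n) ∈ A := by
      intro j _; exact hallA _
    have hr := reach_arc hn harc
    have he1 : (⟨v1.1, by simpa using hv1m⟩ : ↥((↑A : Set (ZMod n)))) = v1 := Subtype.ext rfl
    have he2 : (⟨v1.1 + (((v2.1 - v1.1).val : ℕ) : ZMod n), by
        simpa using harc _ le_rfl⟩ : ↥((↑A : Set (ZMod n)))) = v2 := by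
      apply Subtype.ext
      show v1.1 + (((v2.1 - v1.1).val : ℕ) : ZMod n) = v2.1
      rw [zmod_cast_val]; ring
    rw [he1, he2] at hr
    exact hr
  obtain ⟨z, hz⟩ : ∃ z, z ∉ A := by
    by_contra hcon
    push_neg at hcon
    exact hAu (Finset.eq_univ_iff_forall.mpr hcon)
  -- runs for the two components
  obtain ⟨w1, hw1⟩ := c₁.exists_rep
  have hw1A : w1.1 ∈ A := by simpa using w1.2
  obtain ⟨x1, l1, hx1, hxm1, harc1, hend1, hreach1⟩ := find_run hn hw1A hz
  have hc1 : ((cycleGraphZMod n).induce (↑A : Set (ZMod n))).connectedComponentMk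
      ⟨x1, by simpa using hx1⟩ = c₁ := by
    rw [← hw1]
    apply SimpleGraph.ConnectedComponent.sound
    have he : (⟨w1.1, by simpa using hw1A⟩ : ↥((↑A : Set (ZMod n)))) = w1 := Subtype.ext rfl
    rw [← he]
    exact hreach1
  obtain ⟨w2, hw2⟩ := c₂.exists_rep
  have hw2A : w2.1 ∈ A := by simpa using w2.2
  obtain ⟨x2, l2, hx2, hxm2, harc2, hend2, hreach2⟩ := find_run hn hw2A hz
  have hc2 : ((cycleGraphZMod n).induce (↑A : Set (ZMod n))).connectedComponentMk
      ⟨x2, by simpa using hx2⟩ = c₂ := by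
    rw [← hw2]
    apply SimpleGraph.ConnectedComponent.sound
    have he : (⟨w2.1, by simpa using hw2A⟩ : ↥((↑A : Set (ZMod n)))) = w2 := Subtype.ext rfl
    rw [← he]
    exact hreach2
  have hne12 : ((cycleGraphZMod n).induce (↑A : Set (ZMod n))).connectedComponentMk
      ⟨x1, by simpa using hx1⟩ ≠ ((cycleGraphZMod n).induce (↑A : Set (ZMod n))).connectedComponentMk
      ⟨x2, by simpa using hx2⟩ := by
    rw [hc1, hc2]; exact hne
  obtain ⟨vpos, hvpos⟩ : ∃ v, (x2 - x1).val = v := ⟨_, rfl⟩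
  have hvposn : vpos < n := hvpos ▸ ZMod.val_lt _
  have hx2e : x2 = x1 + ((vpos : ℕ) : ZMod n) := by rw [← hvpos, zmod_cast_val]; ring
  -- the second run starts strictly after the first run ends
  have hgap1 : l1 + 2 ≤ vpos := by
    rcases Nat.lt_or_ge vpos (l1 + 1) with hc | hc
    · exfalso
      apply hne12
      symm
      rw [comp_supp hn hAu hx1 hxm1 harc1 hend1 x2 hx2]
      omega
    rcases Nat.eq_or_lt_of_le hc with hc' | hc'
    · exfalso
      apply hend1
      have he : x1 + ((l1 + 1 : ℕ) : ZMod n) = x2 := by rw [hx2e, ← hc']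
      rw [he]; exact hx2
    · omega
  -- the second run does not wrap around past x1
  have hwrap : vpos + l2 ≤ n - 2 := by
    have h1 : vpos + l2 < n := by
      by_contra hcon
      push_neg at hcon
      have hj0 : n - vpos ≤ l2 := by omega
      have he : x2 + ((n - vpos : ℕ) : ZMod n) = x1 := by
        rw [hx2e]
        push_cast [Nat.cast_sub (le_of_lt hvposn)]
        rw [ZMod.natCast_self n]
        ring
      apply hne12
      have he2 : x1 - x2 = ((n - vpos : ℕ) : ZMod n) := by rw [← he]; ring
      have hv : (x1 - x2).val = n - vpos := by
        rw [he2, ZMod.val_cast_of_lt (by omega)]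
      exact (comp_supp hn hAu hx2 hxm2 harc2 hend2 x1 hx1).mpr (by omega)
    rcases Nat.eq_or_lt_of_le (by omega : vpos + l2 + 1 ≤ n) with hc | hc
    · exfalso
      apply hxm1
      have he : x2 + ((l2 : ℕ) : ZMod n) = x1 - ((1:ℕ) : ZMod n) := by
        rw [hx2e]
        have h2 : ((vpos:ℕ) : ZMod n) + ((l2:ℕ) : ZMod n) = ((vpos + l2 : ℕ) : ZMod n) := by
          push_cast; ring
        have h3 : vpos + l2 = n - 1 := by omega
        have h4 : ((n - 1 : ℕ) : ZMod n) = -1 := by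
          conv_lhs => rw [show ((n - 1 : ℕ) : ZMod n) = ((n:ℕ) : ZMod n) - 1 by
            push_cast [Nat.cast_sub (by omega : 1 ≤ n)]; ring]
          rw [ZMod.natCast_self n]; ring
        rw [add_assoc, h2, h3, h4]
        push_cast; ring
      rw [← he]
      exact harc2 l2 le_rfl
    · omega
  -- membership characterization
  have hmem : ∀ y : ZMod n, y ∈ A ↔
      ((y - x1).val ≤ l1 ∨ (vpos ≤ (y - x1).val ∧ (y - x1).val ≤ vpos + l2)) := by
    intro y
    constructor
    · intro hy
      rcases hall (((cycleGraphZMod n).induce (↑A : Set (ZMod n))).connectedComponentMk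
          ⟨y, by simpa using hy⟩) with hcy | hcy
      · left
        rw [← hc1] at hcy
        exact (comp_supp hn hAu hx1 hxm1 harc1 hend1 y hy).mp hcy
      · right
        rw [← hc2] at hcy
        have hyl2 := (comp_supp hn hAu hx2 hxm2 harc2 hend2 y hy).mp hcy
        have he : y - x1 = (y - x2) + (x2 - x1) := by ring
        have hv : (y - x1).val = (y - x2).val + vpos := by
          rw [he, ZMod.val_add, hvpos, Nat.mod_eq_of_lt (by
            have := ZMod.val_lt (y - x2)
            omega)]
        omega
    · intro hy
      rcases hy with hy | hy
      · have hyx : y = x1 + (((y - x1).val : ℕ) : ZMod n) := by rw [zmod_cast_val]; ring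
        rw [hyx]
        exact harc1 _ (by omega)
      · obtain ⟨w, hw⟩ : ∃ w, (y - x1).val = w := ⟨_, rfl⟩
        have hyx : y = x2 + ((w - vpos : ℕ) : ZMod n) := by
          have h5 : y = x1 + ((w : ℕ) : ZMod n) := by rw [← hw, zmod_cast_val]; ring
          rw [h5, hx2e]
          push_cast [Nat.cast_sub (by omega : vpos ≤ w)]
          ring
        rw [hyx]
        exact harc2 _ (by omega)
  -- a helper for positions
  have hposval : ∀ w : ℕ, w < n → (x1 + ((w:ℕ) : ZMod n) - x1).val = w := by
    intro w hwn
    have he : x1 + ((w:ℕ) : ZMod n) - x1 = ((w:ℕ) : ZMod n) := by ring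
    rw [he, ZMod.val_cast_of_lt hwn]
  -- name the parameters
  refine ⟨x1, l1 + 1, vpos - (l1 + 1), l2 + 1, n - vpos - (l2 + 1), by omega, by omega,
    by omega, by omega, by omega, ?_, ?_, ?_⟩
  · -- size balance from the component-size hypothesis
    have hs1 : (((cycleGraphZMod n).induce (↑A : Set (ZMod n))).connectedComponentMk
        ⟨x1, by simpa using hx1⟩).supp.ncard = l1 + 1 :=
      supp_ncard hn hAu hx1 hxm1 harc1 hend1
    have hs2 : (((cycleGraphZMod n).induce (↑A : Set (ZMod n))).connectedComponentMk
        ⟨x2, by simpa using hx2⟩).supp.ncard = l2 + 1 :=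
      supp_ncard hn hAu hx2 hxm2 harc2 hend2
    rw [hc1] at hs1
    rw [hc2] at hs2
    rw [hs1, hs2] at hbal1 hbal2
    omega
  · -- gap balance from the complement hypothesis
    obtain ⟨g1, hg1e⟩ : ∃ g, vpos - (l1 + 1) = g := ⟨_, rfl⟩
    obtain ⟨g2, hg2e⟩ : ∃ g, n - vpos - (l2 + 1) = g := ⟨_, rfl⟩
    rw [hg1e, hg2e]
    have hg1pos : 1 ≤ g1 := by omega
    have hg2pos : 1 ≤ g2 := by omega
    have hCmem : ∀ y : ZMod n, y ∈ univ \ A ↔ ¬(y ∈ A) := by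
      intro y; simp [Finset.mem_sdiff]
    have hCu : (univ \ A : Finset (ZMod n)) ≠ univ := by
      intro hcon
      have : x1 ∈ univ \ A := by rw [hcon]; exact mem_univ _
      exact (hCmem x1).mp this hx1
    -- first run of the complement
    obtain ⟨y1, hy1e⟩ : ∃ y, x1 + ((l1 + 1 : ℕ) : ZMod n) = y := ⟨_, rfl⟩
    have hy1C : y1 ∈ univ \ A := by
      rw [hCmem, hmem, ← hy1e, hposval _ (by omega)]
      omega
    have hy1m : y1 - ((1:ℕ) : ZMod n) ∉ univ \ A := by
      rw [hCmem]
      push_neg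
      have he : y1 - ((1:ℕ) : ZMod n) = x1 + ((l1 : ℕ) : ZMod n) := by
        rw [← hy1e]; push_cast; ring
      rw [he, hmem, hposval _ (by omega)]
      omega
    have harcC1 : ∀ j ≤ g1 - 1, y1 + ((j:ℕ) : ZMod n) ∈ univ \ A := by
      intro j hj
      have he : y1 + ((j:ℕ) : ZMod n) = x1 + ((l1 + 1 + j : ℕ) : ZMod n) := by
        rw [← hy1e]; push_cast; ring
      rw [hCmem, he, hmem, hposval _ (by omega)]
      omega
    have hendC1 : y1 + ((g1 - 1 + 1 : ℕ) : ZMod n) ∉ univ \ A := by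
      rw [hCmem]
      push_neg
      have he : y1 + ((g1 - 1 + 1 : ℕ) : ZMod n) = x1 + ((vpos : ℕ) : ZMod n) := by
        rw [← hy1e]
        have h7 : ((g1 - 1 + 1 : ℕ) : ZMod n) = ((vpos - (l1+1) : ℕ) : ZMod n) := by
          congr 1; omega
        rw [h7]
        have h8 : (l1 + 1) + (vpos - (l1+1)) = vpos := by omega
        conv_rhs => rw [show ((vpos:ℕ) : ZMod n) = (((l1+1) + (vpos - (l1+1)) : ℕ) : ZMod n) by
          congr 1; omega]
        push_cast
        ring
      rw [he, ← hx2e, hmem]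
      have : (x2 - x1).val = vpos := hvpos
      omega
    -- second run of the complement
    obtain ⟨y2, hy2e⟩ : ∃ y, x1 + ((vpos + l2 + 1 : ℕ) : ZMod n) = y := ⟨_, rfl⟩
    have hy2C : y2 ∈ univ \ A := by
      rw [hCmem, hmem, ← hy2e, hposval _ (by omega)]
      omega
    have hy2m : y2 - ((1:ℕ) : ZMod n) ∉ univ \ A := by
      rw [hCmem]
      push_neg
      have he : y2 - ((1:ℕ) : ZMod n) = x1 + ((vpos + l2 : ℕ) : ZMod n) := by
        rw [← hy2e]; push_cast; ring
      rw [he, hmem, hposval _ (by omega)]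
      omega
    have harcC2 : ∀ j ≤ g2 - 1, y2 + ((j:ℕ) : ZMod n) ∈ univ \ A := by
      intro j hj
      have he : y2 + ((j:ℕ) : ZMod n) = x1 + ((vpos + l2 + 1 + j : ℕ) : ZMod n) := by
        rw [← hy2e]; push_cast; ring
      rw [hCmem, he, hmem, hposval _ (by omega)]
      omega
    have hendC2 : y2 + ((g2 - 1 + 1 : ℕ) : ZMod n) ∉ univ \ A := by
      rw [hCmem]
      push_neg
      have he : y2 + ((g2 - 1 + 1 : ℕ) : ZMod n) = x1 := by
        rw [← hy2e]
        have h7 : ((g2 - 1 + 1 : ℕ) : ZMod n) = ((n - vpos - (l2+1) : ℕ) : ZMod n) := by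
          congr 1; omega
        rw [h7]
        have h8 : (vpos + l2 + 1) + (n - vpos - (l2+1)) = n := by omega
        have h9 : ((vpos + l2 + 1 : ℕ) : ZMod n) + ((n - vpos - (l2+1) : ℕ) : ZMod n)
            = ((n:ℕ) : ZMod n) := by
          rw [← Nat.cast_add, h8]
        rw [add_assoc, h9, ZMod.natCast_self]
        ring
      rw [he, hmem]
      left
      simp
    -- the two complement runs are in different components
    have hneC : ((cycleGraphZMod n).induce (↑(univ \ A) : Set (ZMod n))).connectedComponentMk
        ⟨y1, by simpa using hy1C⟩
        ≠ ((cycleGraphZMod n).induce (↑(univ \ A) : Set (ZMod n))).connectedComponentMk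
        ⟨y2, by simpa using hy2C⟩ := by
      intro hcon
      have hv21 : (y2 - y1).val = vpos + l2 - l1 := by
        have he : y2 - y1 = ((vpos + l2 - l1 : ℕ) : ZMod n) := by
          rw [← hy1e, ← hy2e]
          push_cast [Nat.cast_sub (by omega : l1 ≤ vpos + l2)]
          push_cast
          ring
        rw [he, ZMod.val_cast_of_lt (by omega)]
      have := (comp_supp hn hCu hy1C hy1m harcC1 hendC1 y2 hy2C).mp hcon.symm
      omega
    have hsg1 : (((cycleGraphZMod n).induce (↑(univ \ A) : Set (ZMod n))).connectedComponentMk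
        ⟨y1, by simpa using hy1C⟩).supp.ncard = g1 - 1 + 1 :=
      supp_ncard hn hCu hy1C hy1m harcC1 hendC1
    have hsg2 : (((cycleGraphZMod n).induce (↑(univ \ A) : Set (ZMod n))).connectedComponentMk
        ⟨y2, by simpa using hy2C⟩).supp.ncard = g2 - 1 + 1 :=
      supp_ncard hn hCu hy2C hy2m harcC2 hendC2
    -- use the almost-goodness of the complement
    rcases hA2 with h1 | h1 | ⟨d1, d2, hneD, hallD, hb1, hb2⟩
    · -- complement can't have exactly one element
      exfalso
      have hy12 : y1 ≠ y2 := by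
        intro hcon
        have hv1 : (y1 - x1).val = l1 + 1 := by rw [← hy1e, hposval _ (by omega)]
        have hv2 : (y2 - x1).val = vpos + l2 + 1 := by rw [← hy2e, hposval _ (by omega)]
        rw [hcon] at hv1
        omega
      have := Finset.one_lt_card.mpr ⟨y1, hy1C, y2, hy2C, hy12⟩
      omega
    · -- complement can't have n - 1 elements
      exfalso
      have hx12 : x1 ≠ x2 := by
        intro hcon
        have hv2 : (x2 - x1).val = vpos := hvpos
        rw [← hcon] at hv2
        simp at hv2
        omega
      have hcard2 : 2 ≤ A.card := Finset.one_lt_card.mpr ⟨x1, hx1, x2, hx2, hx12⟩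
      have hcardC : (univ \ A).card = n - A.card := by
        rw [Finset.card_sdiff_of_subset (Finset.subset_univ A), Finset.card_univ, ZMod.card]
      have hAn : A.card ≤ n := by
        have := Finset.card_le_card (Finset.subset_univ A)
        rwa [Finset.card_univ, ZMod.card] at this
      omega
    · -- the two components of the complement are the two gap runs
      rcases hallD (((cycleGraphZMod n).induce (↑(univ \ A) : Set (ZMod n))).connectedComponentMk
          ⟨y1, by simpa using hy1C⟩) with e1 | e1 <;>
        rcases hallD (((cycleGraphZMod n).induce (↑(univ \ A) : Set (ZMod n))).connectedComponentMk
          ⟨y2, by simpa using hy2C⟩) with e2 | e2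
      · exact absurd (e1.trans e2.symm) hneC
      · rw [← e1, ← e2, hsg1, hsg2] at hb1 hb2
        omega
      · rw [← e1, ← e2, hsg1, hsg2] at hb1 hb2
        omega
      · exact absurd (e1.trans e2.symm) hneC
  · -- the characterization of A
    have hva : l1 + 1 + (vpos - (l1+1)) = vpos := by omega
    have hvb : l1 + 1 + (vpos - (l1+1)) + (l2 + 1) = vpos + l2 + 1 := by omega
    rw [hvb, hva]
    ext y
    simp only [Finset.mem_filter, Finset.mem_univ, true_and]
    rw [hmem y]
    omega

lemma card_window_univ (i : ZMod n) :
    ((univ : Finset (ZMod n)).filter (fun u => (u - i).val < n/2)).card = n/2 := by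
  rw [card_filter_zmod (n := n) i (fun j => j < n/2)]
  have h : (Finset.range n).filter (fun j => j < n/2) = Finset.range (n/2) := by
    ext j
    simp only [Finset.mem_filter, Finset.mem_range]
    omega
  rw [h, Finset.card_range]

theorem good_implies_maximizer' (hn : 1 ≤ n)
    (A : Finset (ZMod n)) (hA : GoodSet n A) :
    IsWienerMaximizer (cycleGraphZMod n) A := by
  rcases Nat.lt_or_ge n 2 with hn1 | hn2
  · -- n = 1 : everything is trivial
    have hn1' : n = 1 := by omega
    subst hn1'
    intro B hB
    have hempty : ∀ (C : Finset (ZMod 1)), C.offDiag = ∅ := by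
      intro C
      ext p
      simp only [Finset.mem_offDiag, Finset.notMem_empty, iff_false, not_and]
      intro _ _
      exact fun hne => hne (Subsingleton.elim _ _)
    unfold wienerSet
    rw [hempty, hempty]
  · obtain ⟨hA1, hA2⟩ := hA
    rcases hA1 with h1 | h1 | ⟨cc1, cc2, hnecc, hallcc, hb1, hb2⟩
    · -- |A| = 1
      intro B hB
      have hB1 : B.card = 1 := hB.trans h1
      obtain ⟨b, rfl⟩ := Finset.card_eq_one.mp hB1
      unfold wienerSet
      have : ({b} : Finset (ZMod n)).offDiag = ∅ := by
        ext p
        simp only [Finset.mem_offDiag, Finset.mem_singleton, Finset.notMem_empty, iff_false,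
          not_and]
        intro hp1 hp2
        rw [hp1, hp2]
        simp
      rw [this]
      simp
    · -- |A| = n - 1
      have hcardC : (univ \ A).card = 1 := by
        rw [Finset.card_sdiff_of_subset (Finset.subset_univ A), Finset.card_univ, ZMod.card, h1]
        omega
      obtain ⟨z, hzC⟩ := Finset.card_eq_one.mp hcardC
      have hAz : A = univ \ ({z} : Finset (ZMod n)) := by
        rw [← hzC, Finset.sdiff_sdiff_self_left, Finset.inter_comm]
        exact (Finset.inter_eq_left.mpr (Finset.subset_univ A)).symm
      apply maximizer_of_balanced hn2 A (n/2 - 1)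
      intro i
      have hsplit : ((univ : Finset (ZMod n)).filter (fun u => (u - i).val < n/2)).card
          = wcount A i + (({z} : Finset (ZMod n)).filter (fun u => (u - i).val < n/2)).card := by
        unfold wcount
        rw [hAz]
        rw [← Finset.card_union_of_disjoint, ← Finset.filter_union]
        · congr 2
          rw [Finset.sdiff_union_self_eq_union]
          rw [Finset.union_comm]
          exact (Finset.union_eq_right.mpr (Finset.subset_univ _)).symm
        · apply Finset.disjoint_filter_filter
          exact Finset.sdiff_disjoint
      rw [card_window_univ] at hsplit
      have hzle : (({z} : Finset (ZMod n)).filter (fun u => (u - i).val < n/2)).card ≤ 1 := by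
        calc _ ≤ ({z} : Finset (ZMod n)).card := Finset.card_filter_le _ _
        _ = 1 := Finset.card_singleton z
      have hhpos : 1 ≤ n/2 := by omega
      omega
    · -- two components
      obtain ⟨t, s1, g1, s2, g2, hs1, hg1, hs2, hg2, hsum, hsbal, hgbal, hchar⟩ :=
        extract hn2 A cc1 cc2 hnecc hallcc hb1 hb2 hA2
      apply maximizer_of_balanced hn2 A ((s1 + s2 - n % 2)/2)
      exact wcount_two_arc hn2 t hs1 hg1 hs2 hg2 hsum hsbal hgbal A hchar

end AuxGoodMaximizer

/-- For every integer `n ≥ 1`, if a set of vertices `A` of the cycle `C_n` is good,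
then `A` is a maximizer of the Wiener index `W` on `C_n`. -/
theorem good_implies_maximizer (n : ℕ) [NeZero n] (hn : 1 ≤ n)
    (A : Finset (ZMod n)) (hA : GoodSet n A) :
    IsWienerMaximizer (cycleGraphZMod n) A :=
  good_implies_maximizer' hn A hA
end

section
/- Suppose A ⊆ V(C_n) is good and |A| = ℓ_1 + ℓ_2 where ℓ_1 and ℓ_2 are positive integers. Then there exists a partition {A_1, A_2} of A such that A_1 and A_2 are good, |A_1| = ℓ_1, and |A_2| = ℓ_2. -/
open SimpleGraph Finset

section Aux
/-- arc of length `L` starting at `r` -/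
def arc {n : ℕ} (r : ZMod n) (L : ℕ) : Finset (ZMod n) :=
  (Finset.range L).image (fun i : ℕ => r + (i : ZMod n))

lemma mem_arc {n : ℕ} {r v : ZMod n} {L : ℕ} : v ∈ arc r L ↔ ∃ i < L, v = r + (i : ZMod n) := by
  simp [arc, eq_comm]

lemma natCast_val_self {n : ℕ} [NeZero n] (a : ZMod n) : ((a.val : ℕ) : ZMod n) = a :=
  ZMod.natCast_rightInverse a

lemma val_lt' {n : ℕ} [NeZero n] (a : ZMod n) : a.val < n := ZMod.val_lt a

lemma mem_arc_iff {n : ℕ} [NeZero n] {r v : ZMod n} {L : ℕ} (hL : L ≤ n) :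
    v ∈ arc r L ↔ (v - r).val < L := by
  rw [mem_arc]
  constructor
  · rintro ⟨i, hi, rfl⟩
    simp only [add_sub_cancel_left]
    rw [ZMod.val_natCast_of_lt (by omega)]; exact hi
  · intro h
    exact ⟨(v - r).val, h, by rw [natCast_val_self]; ring⟩

lemma mem_arc_off {n : ℕ} [NeZero n] {r v : ZMod n} {c L : ℕ} (hcL : c + L ≤ n) :
    v ∈ arc (r + (c : ZMod n)) L ↔ c ≤ (v - r).val ∧ (v - r).val < c + L := by
  rw [mem_arc]
  constructor
  · rintro ⟨i, hi, rfl⟩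
    have : r + (c : ZMod n) + (i : ZMod n) - r = ((c + i : ℕ) : ZMod n) := by push_cast; ring
    rw [this, ZMod.val_natCast_of_lt (by omega)]
    omega
  · rintro ⟨h1, h2⟩
    refine ⟨(v - r).val - c, by omega, ?_⟩
    have h3 : (c : ZMod n) + (((v - r).val - c : ℕ) : ZMod n) = (((v-r).val : ℕ) : ZMod n) := by
      rw [← Nat.cast_add]; congr 1; omega
    rw [add_assoc, h3, natCast_val_self]; ring

lemma card_arc {n : ℕ} [NeZero n] {r : ZMod n} {L : ℕ} (hL : L ≤ n) : (arc r L).card = L := by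
  rw [arc, Finset.card_image_of_injOn, Finset.card_range]
  intro i hi j hj hij
  simp only [Finset.mem_coe, Finset.mem_range] at hi hj
  have : ((i : ZMod n)) = (j : ZMod n) := by
    have := congrArg (fun x => x - r) hij
    simpa using this
  have := congrArg ZMod.val this
  rwa [ZMod.val_natCast_of_lt (by omega), ZMod.val_natCast_of_lt (by omega)] at this

lemma arc_zero {n : ℕ} (r : ZMod n) : arc r 0 = ∅ := by simp [arc]

lemma arc_one {n : ℕ} (r : ZMod n) : arc r 1 = {r} := by
  ext v; simp [mem_arc]

lemma cycle_adj {n : ℕ} {u v : ZMod n} :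
    (cycleGraphZMod n).Adj u v ↔ u ≠ v ∧ (v = u + 1 ∨ u = v + 1) := by
  simp [cycleGraphZMod]

lemma zmod_one_ne_zero {n : ℕ} (hn : 2 ≤ n) : (1 : ZMod n) ≠ 0 := by
  intro h
  have h1 : ((1:ℕ) : ZMod n).val = 1 := ZMod.val_natCast_of_lt (by omega)
  rw [Nat.cast_one, h] at h1
  simp at h1

lemma reach_invariant {n : ℕ} [NeZero n] {A : Finset (ZMod n)} (P : ZMod n → Prop)
    (hstep : ∀ u v : ZMod n, u ∈ A → v ∈ A → v = u + 1 → (P u ↔ P v)) :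
    ∀ u v : (↑A : Set (ZMod n)), ((cycleGraphZMod n).induce (↑A : Set (ZMod n))).Reachable u v →
      (P ↑u ↔ P ↑v) := by
  intro u v h
  obtain ⟨w⟩ := h
  induction w with
  | nil => rfl
  | @cons a b c h' w ih =>
    have hab : (cycleGraphZMod n).Adj ↑a ↑b := h'
    rw [cycle_adj] at hab
    have ha : ↑a ∈ A := Finset.mem_coe.mp a.2
    have hb : ↑b ∈ A := Finset.mem_coe.mp b.2
    rcases hab.2 with h1 | h1
    · exact (hstep _ _ ha hb h1).trans ih
    · exact ((hstep _ _ hb ha h1).symm).trans ih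

lemma arc_reachable {n : ℕ} [NeZero n] (hn : 2 ≤ n) {A : Finset (ZMod n)} {r : ZMod n} {L : ℕ}
    (hsub : arc r L ⊆ A) (h0 : r ∈ (↑A : Set (ZMod n))) :
    ∀ i, i < L → ∃ h : r + (i : ZMod n) ∈ (↑A : Set (ZMod n)),
      ((cycleGraphZMod n).induce (↑A : Set (ZMod n))).Reachable ⟨r + (i : ZMod n), h⟩ ⟨r, h0⟩ := by
  intro i
  induction i with
  | zero =>
    intro _
    have h : r + ((0:ℕ) : ZMod n) ∈ (↑A : Set (ZMod n)) := by
      simpa using h0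
    refine ⟨h, ?_⟩
    have : (⟨r + ((0:ℕ) : ZMod n), h⟩ : (↑A : Set (ZMod n))) = ⟨r, h0⟩ :=
      Subtype.ext (by push_cast; ring)
    rw [this]
  | succ i ih =>
    intro hi
    obtain ⟨h, hr⟩ := ih (by omega)
    have hmem : r + ((i+1:ℕ) : ZMod n) ∈ A := hsub (mem_arc.mpr ⟨i+1, hi, rfl⟩)
    refine ⟨Finset.mem_coe.mpr hmem, ?_⟩
    have hadj : ((cycleGraphZMod n).induce (↑A : Set (ZMod n))).Adj
        ⟨r + ((i+1:ℕ) : ZMod n), Finset.mem_coe.mpr hmem⟩ ⟨r + ((i:ℕ) : ZMod n), h⟩ := by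
      have hne : r + ((i+1:ℕ) : ZMod n) ≠ r + ((i:ℕ) : ZMod n) := by
        intro hEq
        have : ((i:ZMod n) + 1) = (i : ZMod n) := by
          push_cast at hEq
          exact add_left_cancel hEq
        exact zmod_one_ne_zero hn (by linear_combination this)
      have hadj' : (cycleGraphZMod n).Adj (r + ((i+1:ℕ) : ZMod n)) (r + ((i:ℕ) : ZMod n)) := by
        rw [cycle_adj]
        exact ⟨hne, Or.inr (by push_cast; ring)⟩
      exact SimpleGraph.comap_adj.mpr hadj'
    exact hadj.reachable.trans hr

section TwoArcs
variable {n : ℕ} [NeZero n]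

lemma twoArcs_mem {p g1 q g2 : ℕ} (hsum : p+g1+q+g2 = n) {s v : ZMod n} :
    v ∈ arc s p ∪ arc (s + ((p+g1 : ℕ) : ZMod n)) q ↔
      ((v-s).val < p ∨ (p+g1 ≤ (v-s).val ∧ (v-s).val < p+g1+q)) := by
  rw [Finset.mem_union, mem_arc_iff (by omega), mem_arc_off (by omega)]

lemma twoArcs_components {p g1 q g2 : ℕ} (hp : 1 ≤ p) (hg1 : 1 ≤ g1) (hq : 1 ≤ q) (hg2 : 1 ≤ g2)
    (hsum : p+g1+q+g2 = n) (s : ZMod n) {A : Finset (ZMod n)}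
    (hA : A = arc s p ∪ arc (s + ((p+g1 : ℕ) : ZMod n)) q) :
    ∃ c₁ c₂ : ((cycleGraphZMod n).induce (↑A : Set (ZMod n))).ConnectedComponent,
      c₁ ≠ c₂ ∧ (∀ c, c = c₁ ∨ c = c₂) ∧ Subtype.val '' c₁.supp = ↑(arc s p) ∧
      Subtype.val '' c₂.supp = ↑(arc (s + ((p+g1 : ℕ) : ZMod n)) q) := by
  have hmem : ∀ v : ZMod n, v ∈ A ↔
      ((v-s).val < p ∨ (p+g1 ≤ (v-s).val ∧ (v-s).val < p+g1+q)) := by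
    intro v; rw [hA]; exact twoArcs_mem hsum
  have hstep : ∀ u v : ZMod n, u ∈ A → v ∈ A → v = u + 1 →
      ((u-s).val < p ↔ (v-s).val < p) := by
    intro u v hu hv huv
    rw [hmem] at hu hv
    have hv1 : v - s = (u - s) + 1 := by rw [huv]; ring
    have h1v : (1 : ZMod n).val = 1 := by
      rw [show (1 : ZMod n) = ((1:ℕ) : ZMod n) from Nat.cast_one.symm,
        ZMod.val_natCast_of_lt (by omega)]
    have hval : (v-s).val = ((u-s).val + 1) % n := by rw [hv1, ZMod.val_add, h1v]
    have hlt : (u-s).val < n := ZMod.val_lt _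
    rcases Nat.lt_or_ge ((u-s).val + 1) n with h | h
    · rw [Nat.mod_eq_of_lt h] at hval; omega
    · have h' : (u-s).val + 1 = n := by omega
      rw [h', Nat.mod_self] at hval; omega
  have hs0 : (s - s).val = 0 := by rw [sub_self, ZMod.val_zero]
  have hsA : s ∈ A := (hmem s).mpr (by omega)
  have hsS : s ∈ (↑A : Set (ZMod n)) := Finset.mem_coe.mpr hsA
  set t := s + ((p+g1 : ℕ) : ZMod n) with ht_def
  have htval : (t - s).val = p + g1 := by
    rw [ht_def, add_sub_cancel_left, ZMod.val_natCast_of_lt (by omega)]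
  have htA : t ∈ A := (hmem t).mpr (by omega)
  have htS : t ∈ (↑A : Set (ZMod n)) := Finset.mem_coe.mpr htA
  set G' := (cycleGraphZMod n).induce (↑A : Set (ZMod n)) with hG'
  have reach1 : ∀ (x : ZMod n) (hx : x ∈ (↑A : Set (ZMod n))), (x - s).val < p →
      G'.Reachable ⟨x, hx⟩ ⟨s, hsS⟩ := by
    intro x hx hxp
    have hsub : arc s p ⊆ A := by rw [hA]; exact Finset.subset_union_left
    obtain ⟨h, hr⟩ := arc_reachable (by omega) hsub hsS ((x - s).val) hxp
    have hxe : (⟨x, hx⟩ : (↑A : Set (ZMod n))) = ⟨s + (((x-s).val : ℕ) : ZMod n), h⟩ :=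
      Subtype.ext (by show x = s + (((x-s).val : ℕ) : ZMod n); rw [natCast_val_self]; ring)
    rw [hxe]; exact hr
  have reach2 : ∀ (x : ZMod n) (hx : x ∈ (↑A : Set (ZMod n))),
      p+g1 ≤ (x - s).val → (x-s).val < p+g1+q → G'.Reachable ⟨x, hx⟩ ⟨t, htS⟩ := by
    intro x hx h1 h2
    have hsub : arc t q ⊆ A := by rw [hA]; exact Finset.subset_union_right
    have hxt : (x - t).val = (x - s).val - (p + g1) := by
      have hx2 : x - t = (((x-s).val - (p+g1) : ℕ) : ZMod n) := by
        rw [Nat.cast_sub h1, natCast_val_self, ht_def]; push_cast; ring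
      rw [hx2, ZMod.val_natCast_of_lt (by have := ZMod.val_lt (x-s); omega)]
    obtain ⟨h, hr⟩ := arc_reachable (by omega) hsub htS ((x-t).val) (by omega)
    have hxe : (⟨x, hx⟩ : (↑A : Set (ZMod n))) = ⟨t + (((x-t).val : ℕ) : ZMod n), h⟩ :=
      Subtype.ext (by show x = t + (((x-t).val : ℕ) : ZMod n); rw [natCast_val_self]; ring)
    rw [hxe]; exact hr
  refine ⟨G'.connectedComponentMk ⟨s, hsS⟩, G'.connectedComponentMk ⟨t, htS⟩, ?_, ?_, ?_, ?_⟩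
  · intro hEq
    have hre := SimpleGraph.ConnectedComponent.eq.mp hEq
    have := reach_invariant (fun x => (x - s).val < p) hstep _ _ hre
    simp only [hs0, htval] at this
    omega
  · intro c
    obtain ⟨v, rfl⟩ := c.exists_rep
    rcases (hmem ↑v).mp (Finset.mem_coe.mp v.2) with h | h
    · exact Or.inl (SimpleGraph.ConnectedComponent.sound (reach1 ↑v v.2 h))
    · exact Or.inr (SimpleGraph.ConnectedComponent.sound (reach2 ↑v v.2 h.1 h.2))
  · ext y
    simp only [Set.mem_image, SimpleGraph.ConnectedComponent.mem_supp_iff, Finset.mem_coe]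
    constructor
    · rintro ⟨z, hz, rfl⟩
      have hre := SimpleGraph.ConnectedComponent.eq.mp hz
      have hiff := reach_invariant (fun x => (x - s).val < p) hstep _ _ hre
      simp only [hs0] at hiff
      rw [mem_arc_iff (by omega)]
      exact hiff.mpr (by omega)
    · intro hy
      have hy' : (y - s).val < p := (mem_arc_iff (by omega)).mp hy
      have hyA : y ∈ (↑A : Set (ZMod n)) := Finset.mem_coe.mpr ((hmem y).mpr (Or.inl hy'))
      exact ⟨⟨y, hyA⟩, SimpleGraph.ConnectedComponent.sound (reach1 y hyA hy'), rfl⟩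
  · ext y
    simp only [Set.mem_image, SimpleGraph.ConnectedComponent.mem_supp_iff, Finset.mem_coe]
    constructor
    · rintro ⟨z, hz, rfl⟩
      have hre := SimpleGraph.ConnectedComponent.eq.mp hz
      have hiff := reach_invariant (fun x => (x - s).val < p) hstep _ _ hre
      simp only [htval] at hiff
      have hz2 : ¬ ((↑z - s).val < p) := by
        intro hlt
        have := hiff.mp hlt
        omega
      have hzA := (hmem ↑z).mp (Finset.mem_coe.mp z.2)
      rw [mem_arc_off (by omega)]
      omega
    · intro hy
      rw [mem_arc_off (by omega)] at hy
      have hyA : y ∈ (↑A : Set (ZMod n)) := Finset.mem_coe.mpr ((hmem y).mpr (Or.inr hy))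
      exact ⟨⟨y, hyA⟩, SimpleGraph.ConnectedComponent.sound (reach2 y hyA hy.1 hy.2), rfl⟩

end TwoArcs

section TwoArcs2
variable {n : ℕ} [NeZero n]

lemma ncard_of_val_image {A : Finset (ZMod n)} {S : Set ((↑A : Set (ZMod n)))}
    {F : Finset (ZMod n)} (h : Subtype.val '' S = ↑F) : S.ncard = F.card := by
  rw [← Set.ncard_coe_finset, ← h, Set.ncard_image_of_injective _ Subtype.val_injective]

lemma good_singleton (v : ZMod n) : GoodSet n {v} := by
  constructor
  · left; simp
  · right; left
    rw [Finset.card_sdiff_of_subset (by simp), Finset.card_univ, Finset.card_singleton, ZMod.card]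

lemma twoArcs_almostGood {p g1 q g2 : ℕ} (hp : 1 ≤ p) (hg1 : 1 ≤ g1) (hq : 1 ≤ q) (hg2 : 1 ≤ g2)
    (hsum : p+g1+q+g2 = n) (s : ZMod n) {A : Finset (ZMod n)}
    (hA : A = arc s p ∪ arc (s + ((p+g1 : ℕ) : ZMod n)) q)
    (hb1 : p ≤ q + 1) (hb2 : q ≤ p + 1) : AlmostGood n A := by
  obtain ⟨c₁, c₂, hne, hall, h1, h2⟩ := twoArcs_components hp hg1 hq hg2 hsum s hA
  right; right
  refine ⟨c₁, c₂, hne, hall, ?_, ?_⟩ <;>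
    rw [ncard_of_val_image h1, ncard_of_val_image h2, card_arc (by omega), card_arc (by omega)] <;>
    omega

lemma twoArcs_disjoint {p g1 q g2 : ℕ} (hsum : p+g1+q+g2 = n) (s : ZMod n) :
    Disjoint (arc s p) (arc (s + ((p+g1 : ℕ) : ZMod n)) q) := by
  rw [Finset.disjoint_left]
  intro a h1 h2
  rw [mem_arc_iff (by omega)] at h1
  rw [mem_arc_off (by omega)] at h2
  omega

lemma twoArcs_card {p g1 q g2 : ℕ} (hsum : p+g1+q+g2 = n) (s : ZMod n) :
    (arc s p ∪ arc (s + ((p+g1 : ℕ) : ZMod n)) q).card = p + q := by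
  rw [Finset.card_union_of_disjoint (twoArcs_disjoint hsum s), card_arc (by omega),
    card_arc (by omega)]

lemma twoArcs_bal {p g1 q g2 : ℕ} (hp : 1 ≤ p) (hg1 : 1 ≤ g1) (hq : 1 ≤ q) (hg2 : 1 ≤ g2)
    (hsum : p+g1+q+g2 = n) (s : ZMod n) {A : Finset (ZMod n)}
    (hA : A = arc s p ∪ arc (s + ((p+g1 : ℕ) : ZMod n)) q)
    (hAG : AlmostGood n A) : p ≤ q + 1 ∧ q ≤ p + 1 := by
  have hcard : A.card = p + q := by rw [hA]; exact twoArcs_card hsum s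
  obtain ⟨c₁, c₂, hne, hall, h1, h2⟩ := twoArcs_components hp hg1 hq hg2 hsum s hA
  have e1 : c₁.supp.ncard = p := by rw [ncard_of_val_image h1, card_arc (by omega)]
  have e2 : c₂.supp.ncard = q := by rw [ncard_of_val_image h2, card_arc (by omega)]
  rcases hAG with h | h | ⟨d₁, d₂, hdne, hdall, hb1, hb2⟩
  · omega
  · omega
  · rcases hall d₁ with rfl | rfl <;> rcases hall d₂ with h4 | h4 <;> subst h4 <;>
      first
      | exact absurd rfl hdne
      | (rw [e1, e2] at hb1 hb2; omega)

lemma compl_twoArcs {p g1 q g2 : ℕ} (hsum : p+g1+q+g2 = n) (s : ZMod n) :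
    Finset.univ \ (arc s p ∪ arc (s + ((p+g1 : ℕ) : ZMod n)) q) =
      arc (s + ((p : ℕ) : ZMod n)) g1 ∪ arc (s + ((p+g1+q : ℕ) : ZMod n)) g2 := by
  ext v
  have hv := ZMod.val_lt (v - s)
  rw [Finset.mem_sdiff, Finset.mem_union, Finset.mem_union, mem_arc_iff (by omega),
    mem_arc_off (n := n) (c := p+g1) (by omega), mem_arc_off (n := n) (c := p) (by omega),
    mem_arc_off (n := n) (c := p+g1+q) (by omega)]
  simp only [Finset.mem_univ, true_and]
  omega

lemma twoArcs_good {p g1 q g2 : ℕ} (hp : 1 ≤ p) (hg1 : 1 ≤ g1) (hq : 1 ≤ q) (hg2 : 1 ≤ g2)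
    (hsum : p+g1+q+g2 = n) (s : ZMod n) {A : Finset (ZMod n)}
    (hA : A = arc s p ∪ arc (s + ((p+g1 : ℕ) : ZMod n)) q)
    (hb1 : p ≤ q + 1) (hb2 : q ≤ p + 1) (hc1 : g1 ≤ g2 + 1) (hc2 : g2 ≤ g1 + 1) :
    GoodSet n A := by
  refine ⟨twoArcs_almostGood hp hg1 hq hg2 hsum s hA hb1 hb2, ?_⟩
  have hbase : (s + ((p:ℕ) : ZMod n)) + ((g1+q : ℕ) : ZMod n) = s + ((p+g1+q : ℕ) : ZMod n) := by
    push_cast; ring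
  refine twoArcs_almostGood (p := g1) (g1 := q) (q := g2) (g2 := p) hg1 hq hg2 hp (by omega)
    (s + ((p : ℕ) : ZMod n)) ?_ hc1 hc2
  rw [hA, compl_twoArcs hsum s, hbase]

end TwoArcs2

section Structure
variable {n : ℕ} [NeZero n]

lemma f_step {A : Finset (ZMod n)} {x : ZMod n} (hx : x ∉ A) {u v : ZMod n}
    (hu : u ∈ A) (hv : v ∈ A) (huv : v = u + 1) : (v - x).val = (u - x).val + 1 := by
  have hn : 2 ≤ n := by
    rcases Nat.lt_or_ge n 2 with h | h
    · interval_cases n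
      · exact absurd (NeZero.ne 0) (by simp)
      · exact absurd hu (by rwa [Subsingleton.elim u x])
    · exact h
  have hne : (u - x).val ≠ n - 1 := by
    intro h
    have h1 : u - x = ((n - 1 : ℕ) : ZMod n) := by rw [← h, natCast_val_self]
    have h2 : v - x = 0 := by
      rw [huv]
      have : ((n - 1 : ℕ) : ZMod n) + 1 = ((n : ℕ) : ZMod n) := by
        rw [Nat.cast_sub (by omega : 1 ≤ n)]; push_cast; ring
      calc u + 1 - x = (u - x) + 1 := by ring
        _ = 0 := by rw [h1, this, ZMod.natCast_self]
    exact hx (by rwa [sub_eq_zero.mp h2] at hv)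
  have h1v : (1 : ZMod n).val = 1 := by
    rw [show (1 : ZMod n) = ((1:ℕ) : ZMod n) from Nat.cast_one.symm,
      ZMod.val_natCast_of_lt (by omega)]
  have hv1 : v - x = (u - x) + 1 := by rw [huv]; ring
  have hlt : (u - x).val < n := ZMod.val_lt _
  rw [hv1, ZMod.val_add, h1v, Nat.mod_eq_of_lt (by omega)]

lemma f_adj {A : Finset (ZMod n)} {x : ZMod n} (hx : x ∉ A) {u v : ZMod n}
    (hu : u ∈ A) (hv : v ∈ A) (h : v = u + 1 ∨ u = v + 1) :
    (v - x).val = (u - x).val + 1 ∨ (u - x).val = (v - x).val + 1 := by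
  rcases h with h | h
  · exact Or.inl (f_step hx hu hv h)
  · exact Or.inr (f_step hx hv hu h)

lemma walk_ivt {A : Finset (ZMod n)} {x : ZMod n} (hx : x ∉ A) :
    ∀ (u v : (↑A : Set (ZMod n)))
      (_ : ((cycleGraphZMod n).induce (↑A : Set (ZMod n))).Walk u v) (m : ℕ),
      (((↑u - x : ZMod n).val ≤ m ∧ m ≤ (↑v - x : ZMod n).val) ∨
        ((↑v - x : ZMod n).val ≤ m ∧ m ≤ (↑u - x : ZMod n).val)) →
      ∃ z : (↑A : Set (ZMod n)),
        ((cycleGraphZMod n).induce (↑A : Set (ZMod n))).Reachable u z ∧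
        (↑z - x : ZMod n).val = m := by
  intro u v W
  induction W with
  | nil => intro m hm; exact ⟨_, SimpleGraph.Reachable.refl _, by omega⟩
  | @cons a b c h W ih =>
    intro m hm
    by_cases hma : (↑a - x : ZMod n).val = m
    · exact ⟨a, SimpleGraph.Reachable.refl _, hma⟩
    · have hadj : (cycleGraphZMod n).Adj ↑a ↑b := h
      rw [cycle_adj] at hadj
      have hstep := f_adj hx (Finset.mem_coe.mp a.2) (Finset.mem_coe.mp b.2) hadj.2
      obtain ⟨z, hz1, hz2⟩ := ih m (by omega)
      exact ⟨z, (SimpleGraph.Adj.reachable h).trans hz1, hz2⟩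

lemma comp_supp_arc {A : Finset (ZMod n)} {x : ZMod n} (hx : x ∉ A)
    (c : ((cycleGraphZMod n).induce (↑A : Set (ZMod n))).ConnectedComponent) :
    ∃ (r : ZMod n) (L : ℕ), 1 ≤ L ∧ L ≤ n - 1 ∧ Subtype.val '' c.supp = ↑(arc r L) := by
  classical
  obtain ⟨v₀, hv₀⟩ := c.exists_rep
  set F : Finset ((↑A : Set (ZMod n))) :=
    Finset.univ.filter
      (fun z => ((cycleGraphZMod n).induce (↑A : Set (ZMod n))).connectedComponentMk z = c)
    with hF
  have hFiff : ∀ z, z ∈ F ↔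
      ((cycleGraphZMod n).induce (↑A : Set (ZMod n))).connectedComponentMk z = c := by
    intro z; rw [hF, Finset.mem_filter]; simp
  have hv₀F : v₀ ∈ F := (hFiff v₀).mpr hv₀
  have hFne : F.Nonempty := ⟨v₀, hv₀F⟩
  set T : Finset ℕ :=
    F.image (fun z : (↑A : Set (ZMod n)) => ((z : ZMod n) - x).val) with hT
  have hTne : T.Nonempty := by rw [hT]; exact hFne.image _
  set lo := T.min' hTne with hlo
  set hi := T.max' hTne with hhi
  clear_value lo hi
  obtain ⟨ulo, huloF, hulo⟩ := Finset.mem_image.mp (T.min'_mem hTne)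
  obtain ⟨uhi, huhiF, huhi⟩ := Finset.mem_image.mp (T.max'_mem hTne)
  have hbound : ∀ z ∈ F, lo ≤ ((z : ZMod n) - x).val ∧ ((z : ZMod n) - x).val ≤ hi := by
    intro z hz
    rw [hlo, hhi]
    exact ⟨T.min'_le _ (Finset.mem_image_of_mem _ hz), T.le_max' _ (Finset.mem_image_of_mem _ hz)⟩
  have hpos : ∀ z : (↑A : Set (ZMod n)), 1 ≤ ((z : ZMod n) - x).val := by
    intro z
    rcases Nat.eq_zero_or_pos ((z : ZMod n) - x).val with h | h
    · exfalso
      have : (z : ZMod n) = x := sub_eq_zero.mp ((ZMod.val_eq_zero _).mp h)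
      exact hx (this ▸ Finset.mem_coe.mp z.2)
    · exact h
  have hlopos : 1 ≤ lo := by
    have h1 : ((ulo : ZMod n) - x).val = lo := by rw [hulo, hlo]
    have := hpos ulo
    omega
  have hhilt : hi ≤ n - 1 := by
    have h1 : ((uhi : ZMod n) - x).val = hi := by rw [huhi, hhi]
    have h2 := ZMod.val_lt ((uhi : ZMod n) - x)
    omega
  have hlohi : lo ≤ hi := by have := hbound uhi huhiF; omega
  have hmemF : ∀ z : (↑A : Set (ZMod n)), z ∈ F ↔ z ∈ c.supp := by
    intro z; rw [hFiff, SimpleGraph.ConnectedComponent.mem_supp_iff]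
  refine ⟨x + ((lo : ℕ) : ZMod n), hi + 1 - lo, by omega, by omega, ?_⟩
  ext y
  simp only [Set.mem_image, Finset.mem_coe]
  constructor
  · rintro ⟨z, hz, rfl⟩
    have hzF := (hmemF z).mpr hz
    have hb := hbound z hzF
    rw [mem_arc]
    refine ⟨((z : ZMod n) - x).val - lo, by omega, ?_⟩
    have hze : (z : ZMod n) = x + (((((z : ZMod n)) - x).val : ℕ) : ZMod n) := by
      rw [natCast_val_self]; ring
    have hsplit : ((((z : ZMod n) - x).val : ℕ) : ZMod n) =
        ((lo : ℕ) : ZMod n) + ((((z : ZMod n) - x).val - lo : ℕ) : ZMod n) := by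
      rw [← Nat.cast_add]; congr 1; omega
    conv_lhs => rw [hze, hsplit]
    ring
  · intro hy
    rw [mem_arc] at hy
    obtain ⟨i, hi2, hyv⟩ := hy
    have hreach : ((cycleGraphZMod n).induce (↑A : Set (ZMod n))).Reachable ulo uhi := by
      have h1 := (hFiff ulo).mp huloF
      have h2 := (hFiff uhi).mp huhiF
      exact SimpleGraph.ConnectedComponent.eq.mp (h1.trans h2.symm)
    obtain ⟨W⟩ := hreach
    obtain ⟨z, hz1, hz2⟩ := walk_ivt hx ulo uhi W (lo + i) (by rw [hulo, huhi, ← hlo, ← hhi]; omega)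
    have hzc : z ∈ c.supp := by
      rw [SimpleGraph.ConnectedComponent.mem_supp_iff]
      rw [← (hFiff ulo).mp huloF]
      exact (SimpleGraph.ConnectedComponent.eq.mpr hz1.symm)
    refine ⟨z, hzc, ?_⟩
    have hze : (z : ZMod n) = x + (((lo + i : ℕ)) : ZMod n) := by
      rw [← hz2, natCast_val_self]; ring
    rw [hyv, hze]; push_cast; ring

end Structure

section Structure2
variable {n : ℕ} [NeZero n]

lemma supp_adj_eq {A : Finset (ZMod n)}
    {c c' : ((cycleGraphZMod n).induce (↑A : Set (ZMod n))).ConnectedComponent} {u v : ZMod n}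
    (hu : u ∈ Subtype.val '' c.supp) (hv : v ∈ Subtype.val '' c'.supp)
    (hne : u ≠ v) (huv : v = u + 1) : c = c' := by
  obtain ⟨z, hz, hz0⟩ := hu
  obtain ⟨z', hz', hz0'⟩ := hv
  subst hz0
  subst hz0'
  have hadj : ((cycleGraphZMod n).induce (↑A : Set (ZMod n))).Adj z z' :=
    SimpleGraph.comap_adj.mpr (cycle_adj.mpr ⟨hne, Or.inl huv⟩)
  rw [SimpleGraph.ConnectedComponent.mem_supp_iff] at hz hz'
  rw [← hz, ← hz']
  exact SimpleGraph.ConnectedComponent.sound hadj.reachable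

lemma goodSet_structure {A : Finset (ZMod n)} (hA : GoodSet n A)
    (h2 : 2 ≤ A.card) (hn2 : A.card + 2 ≤ n) :
    ∃ (s : ZMod n) (p g1 q g2 : ℕ), 1 ≤ p ∧ 1 ≤ g1 ∧ 1 ≤ q ∧ 1 ≤ g2 ∧ p+g1+q+g2 = n ∧
      p ≤ q+1 ∧ q ≤ p+1 ∧ g1 ≤ g2+1 ∧ g2 ≤ g1+1 ∧ p + q = A.card ∧
      A = arc s p ∪ arc (s + ((p+g1:ℕ) : ZMod n)) q := by
  have hn1 : 1 ≤ n := Nat.pos_of_ne_zero (NeZero.ne n)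
  have hn4 : 4 ≤ n := by omega
  have hxne : (Finset.univ \ A).Nonempty := by
    rw [← Finset.card_pos, Finset.card_sdiff_of_subset (Finset.subset_univ _), Finset.card_univ, ZMod.card]
    omega
  obtain ⟨x, hx'⟩ := hxne
  have hx : x ∉ A := (Finset.mem_sdiff.mp hx').2
  rcases hA.1 with hc | hc | ⟨c₁, c₂, hne, hall, hb1, hb2⟩
  · omega
  · omega
  obtain ⟨r1, L1, hL1, hL1n, hS1⟩ := comp_supp_arc hx c₁
  obtain ⟨r2, L2, hL2, hL2n, hS2⟩ := comp_supp_arc hx c₂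
  have e1 : c₁.supp.ncard = L1 := by rw [ncard_of_val_image hS1, card_arc (by omega)]
  have e2 : c₂.supp.ncard = L2 := by rw [ncard_of_val_image hS2, card_arc (by omega)]
  rw [e1, e2] at hb1 hb2
  have hU : A = arc r1 L1 ∪ arc r2 L2 := by
    apply Finset.coe_injective
    rw [Finset.coe_union, ← hS1, ← hS2, ← Set.image_union]
    have huniv : c₁.supp ∪ c₂.supp = Set.univ := by
      ext z
      simp only [Set.mem_union, SimpleGraph.ConnectedComponent.mem_supp_iff, Set.mem_univ,
        iff_true]
      exact hall _
    rw [huniv, Set.image_univ, Subtype.range_coe]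
  have hD : Disjoint (arc r1 L1) (arc r2 L2) := by
    rw [Finset.disjoint_left]
    intro a ha1 ha2
    rw [← Finset.mem_coe, ← hS1] at ha1
    rw [← Finset.mem_coe, ← hS2] at ha2
    obtain ⟨z1, hz1, hv1⟩ := ha1
    obtain ⟨z2, hz2, hv2⟩ := ha2
    have : z1 = z2 := Subtype.val_injective (hv1.trans hv2.symm)
    subst this
    rw [SimpleGraph.ConnectedComponent.mem_supp_iff] at hz1 hz2
    exact hne (hz1.symm.trans hz2)
  have hr1mem : r1 ∈ arc r1 L1 := mem_arc.mpr ⟨0, by omega, by simp⟩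
  have hr2mem : r2 ∈ arc r2 L2 := mem_arc.mpr ⟨0, by omega, by simp⟩
  set g1 := ((r2 - r1) - ((L1:ℕ) : ZMod n)).val with hg1def
  set g2 := ((r1 - r2) - ((L2:ℕ) : ZMod n)).val with hg2def
  have hstep_cast : ∀ L : ℕ, 1 ≤ L → ((L - 1 : ℕ) : ZMod n) + 1 = ((L:ℕ) : ZMod n) := by
    intro L hL
    have h' : (L - 1) + 1 = L := by omega
    rw [← h']; push_cast; ring
  have hg1 : 1 ≤ g1 := by
    rcases Nat.eq_zero_or_pos g1 with h0 | h
    · exfalso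
      have hz : (r2 - r1) - ((L1:ℕ) : ZMod n) = 0 := (ZMod.val_eq_zero _).mp h0
      have hr2e : r2 = r1 + ((L1:ℕ) : ZMod n) := by linear_combination hz
      have humem : r1 + ((L1 - 1 : ℕ) : ZMod n) ∈ arc r1 L1 := mem_arc.mpr ⟨L1-1, by omega, rfl⟩
      have hadd : r2 = (r1 + ((L1 - 1 : ℕ) : ZMod n)) + 1 := by
        rw [hr2e, add_assoc, hstep_cast L1 hL1]
      have hneq : r1 + ((L1 - 1 : ℕ) : ZMod n) ≠ r2 := by
        intro hEq
        exact (Finset.disjoint_left.mp hD (hEq ▸ humem)) hr2mem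
      refine hne (supp_adj_eq ?_ ?_ hneq hadd)
      · rw [hS1]; exact Finset.mem_coe.mpr humem
      · rw [hS2]; exact Finset.mem_coe.mpr hr2mem
    · exact h
  have hg2 : 1 ≤ g2 := by
    rcases Nat.eq_zero_or_pos g2 with h0 | h
    · exfalso
      have hz : (r1 - r2) - ((L2:ℕ) : ZMod n) = 0 := (ZMod.val_eq_zero _).mp h0
      have hr1e : r1 = r2 + ((L2:ℕ) : ZMod n) := by linear_combination hz
      have humem : r2 + ((L2 - 1 : ℕ) : ZMod n) ∈ arc r2 L2 := mem_arc.mpr ⟨L2-1, by omega, rfl⟩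
      have hadd : r1 = (r2 + ((L2 - 1 : ℕ) : ZMod n)) + 1 := by
        rw [hr1e, add_assoc, hstep_cast L2 hL2]
      have hneq : r2 + ((L2 - 1 : ℕ) : ZMod n) ≠ r1 := by
        intro hEq
        exact (Finset.disjoint_left.mp hD hr1mem) (hEq ▸ humem)
      refine hne (supp_adj_eq ?_ ?_ hneq hadd).symm
      · rw [hS2]; exact Finset.mem_coe.mpr humem
      · rw [hS1]; exact Finset.mem_coe.mpr hr1mem
    · exact h
  have hr2e : r2 = r1 + ((L1 + g1 : ℕ) : ZMod n) := by
    have h1 : ((g1 : ℕ) : ZMod n) = (r2 - r1) - ((L1:ℕ) : ZMod n) := natCast_val_self _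
    push_cast
    linear_combination -h1
  have hval21 : (r2 - r1).val = L1 + g1 ∧ L1 + g1 < n := by
    have hcast : r2 - r1 = ((L1+g1 : ℕ) : ZMod n) := by rw [hr2e]; ring
    have hmod : (r2 - r1).val = (L1 + g1) % n := by rw [hcast, ZMod.val_natCast]
    have hnotin : ¬ ((r2 - r1).val < L1) := by
      intro hlt
      exact (Finset.disjoint_left.mp hD ((mem_arc_iff (by omega)).mpr hlt)) hr2mem
    have hg1lt : g1 < n := ZMod.val_lt _
    rcases Nat.lt_or_ge (L1 + g1) n with h | h
    · rw [Nat.mod_eq_of_lt h] at hmod; exact ⟨hmod, h⟩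
    · exfalso
      rw [Nat.mod_eq_sub_mod h, Nat.mod_eq_of_lt (by omega)] at hmod
      omega
  have hr1e : r1 = r2 + ((L2 + g2 : ℕ) : ZMod n) := by
    have h1 : ((g2 : ℕ) : ZMod n) = (r1 - r2) - ((L2:ℕ) : ZMod n) := natCast_val_self _
    push_cast
    linear_combination -h1
  have hval12 : (r1 - r2).val = L2 + g2 ∧ L2 + g2 < n := by
    have hcast : r1 - r2 = ((L2+g2 : ℕ) : ZMod n) := by rw [hr1e]; ring
    have hmod : (r1 - r2).val = (L2 + g2) % n := by rw [hcast, ZMod.val_natCast]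
    have hnotin : ¬ ((r1 - r2).val < L2) := by
      intro hlt
      exact (Finset.disjoint_left.mp hD hr1mem) ((mem_arc_iff (by omega)).mpr hlt)
    have hg2lt : g2 < n := ZMod.val_lt _
    rcases Nat.lt_or_ge (L2 + g2) n with h | h
    · rw [Nat.mod_eq_of_lt h] at hmod; exact ⟨hmod, h⟩
    · exfalso
      rw [Nat.mod_eq_sub_mod h, Nat.mod_eq_of_lt (by omega)] at hmod
      omega
  obtain ⟨hv21, hlt21⟩ := hval21
  obtain ⟨hv12, hlt12⟩ := hval12
  have hsum : L1 + g1 + L2 + g2 = n := by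
    have hne21 : r2 - r1 ≠ 0 := by
      intro h0
      rw [h0, ZMod.val_zero] at hv21
      omega
    have h12 : (r1 - r2).val = n - (r2 - r1).val := by
      have hsub : r1 - r2 = -(r2 - r1) := by ring
      rw [hsub, ZMod.neg_val]
      simp [hne21]
    omega
  have hcardA : A.card = L1 + L2 := by
    rw [hU, Finset.card_union_of_disjoint hD, card_arc (by omega), card_arc (by omega)]
  have hAeq : A = arc r1 L1 ∪ arc (r1 + ((L1+g1:ℕ) : ZMod n)) L2 := by rw [hU, hr2e]
  have hgbal : g1 ≤ g2 + 1 ∧ g2 ≤ g1 + 1 := by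
    have hbase : (r1 + ((L1:ℕ):ZMod n)) + ((g1+L2 : ℕ) : ZMod n) =
        r1 + ((L1+g1+L2 : ℕ) : ZMod n) := by push_cast; ring
    have hAc : Finset.univ \ A =
        arc (r1 + ((L1:ℕ):ZMod n)) g1 ∪
          arc ((r1 + ((L1:ℕ):ZMod n)) + ((g1+L2 : ℕ) : ZMod n)) g2 := by
      rw [hAeq, compl_twoArcs (p := L1) (g1 := g1) (q := L2) (g2 := g2) (by omega) r1, hbase]
    exact twoArcs_bal hg1 hL2 hg2 hL1 (by omega) _ hAc hA.2
  exact ⟨r1, L1, g1, L2, g2, hL1, hg1, hL2, hg2, by omega, by omega, by omega,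
    hgbal.1, hgbal.2, by omega, hAeq⟩

end Structure2

section Split
variable {n : ℕ} [NeZero n]

lemma split_main {p g1 q g2 c1 d1 : ℕ} (s : ZMod n) {A : Finset (ZMod n)}
    (hA : A = arc s p ∪ arc (s + ((p+g1:ℕ) : ZMod n)) q)
    (hsum : p+g1+q+g2 = n) (hg1 : 1 ≤ g1) (hg2 : 1 ≤ g2)
    (hc1 : 1 ≤ c1) (hd1 : 1 ≤ d1) (hc1p : c1 + 1 ≤ p) (hd1q : d1 + 1 ≤ q)
    (b1 : c1 ≤ d1 + 1) (b2 : d1 ≤ c1 + 1)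
    (b3 : p - c1 ≤ q - d1 + 1) (b4 : q - d1 ≤ p - c1 + 1)
    (b5 : p - c1 + g1 ≤ q - d1 + g2 + 1) (b6 : q - d1 + g2 ≤ p - c1 + g1 + 1)
    (b7 : g1 + d1 ≤ g2 + c1 + 1) (b8 : g2 + c1 ≤ g1 + d1 + 1) :
    ∃ A1 A2 : Finset (ZMod n), Disjoint A1 A2 ∧ A1 ∪ A2 = A ∧
      GoodSet n A1 ∧ GoodSet n A2 ∧ A1.card = c1 + d1 ∧ A2.card = (p - c1) + (q - d1) := by
  refine ⟨arc s c1 ∪ arc (s + ((c1 + ((p-c1)+g1) : ℕ) : ZMod n)) d1,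
    arc (s + ((c1:ℕ) : ZMod n)) (p-c1) ∪
      arc ((s + ((c1:ℕ):ZMod n)) + (((p-c1) + (g1+d1) : ℕ) : ZMod n)) (q-d1),
    ?_, ?_, ?_, ?_, ?_, ?_⟩
  · rw [Finset.disjoint_left]
    intro a ha1 ha2
    have hbb : (s + ((c1:ℕ):ZMod n)) + (((p-c1) + (g1+d1) : ℕ) : ZMod n) =
        s + ((c1 + ((p-c1) + (g1+d1)) : ℕ) : ZMod n) := by push_cast; ring
    rw [hbb] at ha2
    rw [Finset.mem_union, mem_arc_iff (by omega), mem_arc_off (by omega)] at ha1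
    rw [Finset.mem_union, mem_arc_off (by omega), mem_arc_off (by omega)] at ha2
    omega
  · ext v
    have hvlt := ZMod.val_lt (v - s)
    have hbb : (s + ((c1:ℕ):ZMod n)) + (((p-c1) + (g1+d1) : ℕ) : ZMod n) =
        s + ((c1 + ((p-c1) + (g1+d1)) : ℕ) : ZMod n) := by push_cast; ring
    rw [hA, Finset.mem_union, Finset.mem_union, Finset.mem_union, Finset.mem_union, hbb,
      mem_arc_iff (by omega), mem_arc_off (by omega), mem_arc_off (by omega),
      mem_arc_off (by omega), mem_arc_iff (by omega), mem_arc_off (by omega)]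
    omega
  · exact twoArcs_good (p := c1) (g1 := (p-c1)+g1) (q := d1) (g2 := (q-d1)+g2)
      hc1 (by omega) hd1 (by omega) (by omega) s rfl (by omega) (by omega) b5 b6
  · exact twoArcs_good (p := p-c1) (g1 := g1+d1) (q := q-d1) (g2 := g2+c1)
      (by omega) (by omega) (by omega) (by omega) (by omega) (s + ((c1:ℕ):ZMod n)) rfl
      b3 b4 b7 b8
  · exact twoArcs_card (p := c1) (g1 := (p-c1)+g1) (q := d1) (g2 := (q-d1)+g2) (by omega) s
  · exact twoArcs_card (p := p-c1) (g1 := g1+d1) (q := q-d1) (g2 := g2+c1) (by omega) _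

lemma split_arith (p q g1 g2 l1 l2 : ℕ)
    (hpq : p + q = l1 + l2) (ha1 : p ≤ q+1) (ha2 : q ≤ p+1)
    (hc1 : g1 ≤ g2+1) (hc2 : g2 ≤ g1+1) (hl1 : 2 ≤ l1) (hl2 : 2 ≤ l2) :
    ∃ c1 d1 : ℕ, (c1 + d1 = l1 ∨ c1 + d1 = l2) ∧ 1 ≤ c1 ∧ 1 ≤ d1 ∧ c1+1 ≤ p ∧ d1+1 ≤ q ∧
      c1 ≤ d1 + 1 ∧ d1 ≤ c1 + 1 ∧
      (p - c1) ≤ (q - d1) + 1 ∧ (q - d1) ≤ (p - c1) + 1 ∧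
      (p - c1 + g1) ≤ (q - d1 + g2) + 1 ∧ (q - d1 + g2) ≤ (p - c1 + g1) + 1 ∧
      (g1 + d1) ≤ (g2 + c1) + 1 ∧ (g2 + c1) ≤ (g1 + d1) + 1 := by
  obtain ⟨a1, ha1e⟩ : ∃ a, a = (l1+1)/2 := ⟨_, rfl⟩
  obtain ⟨a0, ha0e⟩ : ∃ a, a = l1/2 := ⟨_, rfl⟩
  obtain ⟨e1, he1e⟩ : ∃ a, a = (l2+1)/2 := ⟨_, rfl⟩
  obtain ⟨e0, he0e⟩ : ∃ a, a = l2/2 := ⟨_, rfl⟩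
  rcases Nat.even_or_odd l1 with he1 | ho1
  · rcases Nat.lt_or_ge (q + g2 + 1) (p + g1) with hc | hc
    · exact ⟨e1, e0, by obtain ⟨m, hm⟩ := he1; omega⟩
    · rcases Nat.lt_or_ge (p + g1 + 1) (q + g2) with hc' | hc'
      · exact ⟨e0, e1, by obtain ⟨m, hm⟩ := he1; omega⟩
      · exact ⟨a0, a0, by obtain ⟨m, hm⟩ := he1; omega⟩
  · rcases Nat.even_or_odd l2 with he2 | ho2
    · rcases Nat.lt_or_ge (q + g2 + 1) (p + g1) with hc | hc
      · exact ⟨a1, a0, by obtain ⟨m, hm⟩ := ho1; obtain ⟨m', hm'⟩ := he2; omega⟩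
      · rcases Nat.lt_or_ge (p + g1 + 1) (q + g2) with hc' | hc'
        · exact ⟨a0, a1, by obtain ⟨m, hm⟩ := ho1; obtain ⟨m', hm'⟩ := he2; omega⟩
        · exact ⟨e0, e0, by obtain ⟨m, hm⟩ := ho1; obtain ⟨m', hm'⟩ := he2; omega⟩
    · rcases le_or_gt g2 g1 with hg | hg
      · exact ⟨a1, a0, by obtain ⟨m, hm⟩ := ho1; obtain ⟨m', hm'⟩ := ho2; omega⟩
      · exact ⟨a0, a1, by obtain ⟨m, hm⟩ := ho1; obtain ⟨m', hm'⟩ := ho2; omega⟩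

end Split

section Split2
variable {n : ℕ} [NeZero n]

lemma split_one {p g1 q g2 : ℕ} (s : ZMod n) {A : Finset (ZMod n)}
    (hA : A = arc s p ∪ arc (s + ((p+g1:ℕ) : ZMod n)) q)
    (hsum : p+g1+q+g2 = n) (hp : 1 ≤ p) (hg1 : 1 ≤ g1) (hq : 1 ≤ q) (hg2 : 1 ≤ g2)
    (hb1 : p ≤ q+1) (hb2 : q ≤ p+1) (hb3 : g1 ≤ g2+1) (hb4 : g2 ≤ g1+1)
    (h3 : 3 ≤ p + q) :
    ∃ A1 A2 : Finset (ZMod n), Disjoint A1 A2 ∧ A1 ∪ A2 = A ∧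
      GoodSet n A1 ∧ GoodSet n A2 ∧ A1.card = 1 ∧ A2.card = p + q - 1 := by
  rcases le_total q p with hpq | hpq
  · rcases le_total g2 g1 with hgg | hgg
    · -- A1 = {s}
      refine ⟨arc s 1, arc (s + ((1:ℕ) : ZMod n)) (p-1) ∪
        arc ((s + ((1:ℕ) : ZMod n)) + (((p-1)+g1 : ℕ) : ZMod n)) q, ?_, ?_, ?_, ?_, ?_, ?_⟩
      · rw [Finset.disjoint_left]
        intro a ha1 ha2
        have hbb : (s + ((1:ℕ):ZMod n)) + (((p-1)+g1 : ℕ) : ZMod n) =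
            s + ((1 + ((p-1)+g1) : ℕ) : ZMod n) := by push_cast; ring
        rw [hbb] at ha2
        rw [mem_arc_iff (by omega)] at ha1
        rw [Finset.mem_union, mem_arc_off (by omega), mem_arc_off (by omega)] at ha2
        omega
      · ext v
        have hvlt := ZMod.val_lt (v - s)
        have hbb : (s + ((1:ℕ):ZMod n)) + (((p-1)+g1 : ℕ) : ZMod n) =
            s + ((1 + ((p-1)+g1) : ℕ) : ZMod n) := by push_cast; ring
        rw [hA, Finset.mem_union, Finset.mem_union, Finset.mem_union, hbb,
          mem_arc_iff (by omega), mem_arc_off (by omega), mem_arc_off (by omega),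
          mem_arc_iff (by omega), mem_arc_off (by omega)]
        omega
      · rw [arc_one]; exact good_singleton s
      · exact twoArcs_good (p := p-1) (g1 := g1) (q := q) (g2 := g2+1)
          (by omega) (by omega) (by omega) (by omega) (by omega) _ rfl
          (by omega) (by omega) (by omega) (by omega)
      · rw [card_arc (by omega)]
      · rw [twoArcs_card (p := p-1) (g1 := g1) (q := q) (g2 := g2+1) (by omega) _]; omega
    · -- A1 = {s + (p-1)}
      refine ⟨arc (s + ((p-1 : ℕ) : ZMod n)) 1, arc s (p-1) ∪
        arc (s + (((p-1)+(g1+1) : ℕ) : ZMod n)) q, ?_, ?_, ?_, ?_, ?_, ?_⟩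
      · rw [Finset.disjoint_left]
        intro a ha1 ha2
        rw [mem_arc_off (by omega)] at ha1
        rw [Finset.mem_union, mem_arc_iff (by omega), mem_arc_off (by omega)] at ha2
        omega
      · ext v
        have hvlt := ZMod.val_lt (v - s)
        rw [hA, Finset.mem_union, Finset.mem_union, Finset.mem_union,
          mem_arc_off (by omega), mem_arc_iff (by omega), mem_arc_off (by omega),
          mem_arc_iff (by omega), mem_arc_off (by omega)]
        omega
      · rw [arc_one]; exact good_singleton _
      · exact twoArcs_good (p := p-1) (g1 := g1+1) (q := q) (g2 := g2)
          (by omega) (by omega) (by omega) (by omega) (by omega) _ rfl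
          (by omega) (by omega) (by omega) (by omega)
      · rw [card_arc (by omega)]
      · rw [twoArcs_card (p := p-1) (g1 := g1+1) (q := q) (g2 := g2) (by omega) _]; omega
  · rcases le_total g1 g2 with hgg | hgg
    · -- A1 = {t}
      refine ⟨arc (s + ((p+g1 : ℕ) : ZMod n)) 1, arc s p ∪
        arc (s + ((p+(g1+1) : ℕ) : ZMod n)) (q-1), ?_, ?_, ?_, ?_, ?_, ?_⟩
      · rw [Finset.disjoint_left]
        intro a ha1 ha2
        rw [mem_arc_off (by omega)] at ha1
        rw [Finset.mem_union, mem_arc_iff (by omega), mem_arc_off (by omega)] at ha2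
        omega
      · ext v
        have hvlt := ZMod.val_lt (v - s)
        rw [hA, Finset.mem_union, Finset.mem_union, Finset.mem_union,
          mem_arc_off (by omega), mem_arc_off (by omega), mem_arc_off (by omega),
          mem_arc_iff (by omega)]
        omega
      · rw [arc_one]; exact good_singleton _
      · exact twoArcs_good (p := p) (g1 := g1+1) (q := q-1) (g2 := g2)
          (by omega) (by omega) (by omega) (by omega) (by omega) _ rfl
          (by omega) (by omega) (by omega) (by omega)
      · rw [card_arc (by omega)]
      · rw [twoArcs_card (p := p) (g1 := g1+1) (q := q-1) (g2 := g2) (by omega) _]; omega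
    · -- A1 = {t + (q-1)}
      refine ⟨arc (s + (((p+g1)+(q-1) : ℕ) : ZMod n)) 1, arc s p ∪
        arc (s + ((p+g1 : ℕ) : ZMod n)) (q-1), ?_, ?_, ?_, ?_, ?_, ?_⟩
      · rw [Finset.disjoint_left]
        intro a ha1 ha2
        rw [mem_arc_off (by omega)] at ha1
        rw [Finset.mem_union, mem_arc_iff (by omega), mem_arc_off (by omega)] at ha2
        omega
      · ext v
        have hvlt := ZMod.val_lt (v - s)
        rw [hA, Finset.mem_union, Finset.mem_union, Finset.mem_union,
          mem_arc_off (by omega), mem_arc_off (by omega), mem_arc_off (by omega),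
          mem_arc_iff (by omega)]
        omega
      · rw [arc_one]; exact good_singleton _
      · exact twoArcs_good (p := p) (g1 := g1) (q := q-1) (g2 := g2+1)
          (by omega) (by omega) (by omega) (by omega) (by omega) _ rfl
          (by omega) (by omega) (by omega) (by omega)
      · rw [card_arc (by omega)]
      · rw [twoArcs_card (p := p) (g1 := g1) (q := q-1) (g2 := g2+1) (by omega) _]; omega

lemma arc_split (s : ZMod n) (l1 l2 : ℕ) (h1 : 1 ≤ l1) (h2 : 1 ≤ l2) (hn : l1 + l2 + 1 = n) :
    ∃ A1 A2 : Finset (ZMod n), Disjoint A1 A2 ∧ A1 ∪ A2 = arc s (l1+l2) ∧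
      GoodSet n A1 ∧ GoodSet n A2 ∧ A1.card = l1 ∧ A2.card = l2 := by
  obtain ⟨c1, hc1e⟩ : ∃ a, a = l1/2 := ⟨_, rfl⟩
  obtain ⟨c2, hc2e⟩ : ∃ a, a = l1 - c1 := ⟨_, rfl⟩
  obtain ⟨d1, hd1e⟩ : ∃ a, a = (l2+1)/2 := ⟨_, rfl⟩
  obtain ⟨d2, hd2e⟩ : ∃ a, a = l2 - d1 := ⟨_, rfl⟩
  have hc2p : 1 ≤ c2 := by omega
  have hd1p : 1 ≤ d1 := by omega
  refine ⟨arc s c1 ∪ arc (s + ((c1+d1 : ℕ) : ZMod n)) c2,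
    arc (s + ((c1:ℕ):ZMod n)) d1 ∪ arc ((s + ((c1:ℕ):ZMod n)) + ((d1+c2 : ℕ):ZMod n)) d2,
    ?_, ?_, ?_, ?_, ?_, ?_⟩
  · rw [Finset.disjoint_left]
    intro a ha1 ha2
    have hbb : (s + ((c1:ℕ):ZMod n)) + ((d1+c2 : ℕ) : ZMod n) =
        s + ((c1 + (d1+c2) : ℕ) : ZMod n) := by push_cast; ring
    rw [hbb] at ha2
    rw [Finset.mem_union, mem_arc_iff (by omega), mem_arc_off (by omega)] at ha1
    rw [Finset.mem_union, mem_arc_off (by omega), mem_arc_off (by omega)] at ha2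
    omega
  · ext v
    have hvlt := ZMod.val_lt (v - s)
    have hbb : (s + ((c1:ℕ):ZMod n)) + ((d1+c2 : ℕ) : ZMod n) =
        s + ((c1 + (d1+c2) : ℕ) : ZMod n) := by push_cast; ring
    rw [Finset.mem_union, Finset.mem_union, Finset.mem_union, hbb,
      mem_arc_iff (by omega), mem_arc_off (by omega), mem_arc_off (by omega),
      mem_arc_off (by omega), mem_arc_iff (by omega)]
    omega
  · rcases Nat.lt_or_ge l1 2 with hl | hl
    · rw [show c1 = 0 by omega, show c2 = 1 by omega, arc_zero, arc_one, Finset.empty_union]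
      exact good_singleton _
    · exact twoArcs_good (p := c1) (g1 := d1) (q := c2) (g2 := d2+1)
        (by omega) (by omega) (by omega) (by omega) (by omega) s rfl
        (by omega) (by omega) (by omega) (by omega)
  · rcases Nat.lt_or_ge l2 2 with hl | hl
    · rw [show d2 = 0 by omega, arc_zero, Finset.union_empty, show d1 = 1 by omega, arc_one]
      exact good_singleton _
    · exact twoArcs_good (p := d1) (g1 := c2) (q := d2) (g2 := c1+1)
        (by omega) (by omega) (by omega) (by omega) (by omega) _ rfl
        (by omega) (by omega) (by omega) (by omega)
  · rw [twoArcs_card (p := c1) (g1 := d1) (q := c2) (g2 := d2+1) (by omega) s]; omega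
  · rw [twoArcs_card (p := d1) (g1 := c2) (q := d2) (g2 := c1+1) (by omega) _]; omega

end Split2

end Aux

/-- If `A ⊆ V(C_n)` is good and `|A| = ℓ₁ + ℓ₂` with `ℓ₁, ℓ₂` positive, then `A` can be
partitioned into good sets `A₁, A₂` with `|A₁| = ℓ₁` and `|A₂| = ℓ₂`. -/
theorem good_two_pieces (n : ℕ) [NeZero n] (A : Finset (ZMod n)) (hA : GoodSet n A)
    (ℓ₁ ℓ₂ : ℕ) (h₁ : 1 ≤ ℓ₁) (h₂ : 1 ≤ ℓ₂) (hsum : A.card = ℓ₁ + ℓ₂) :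
    ∃ A₁ A₂ : Finset (ZMod n), Disjoint A₁ A₂ ∧ A₁ ∪ A₂ = A ∧
      GoodSet n A₁ ∧ GoodSet n A₂ ∧ A₁.card = ℓ₁ ∧ A₂.card = ℓ₂ := by
  have hAn : A.card ≤ n := by
    have := Finset.card_le_card (Finset.subset_univ A)
    rwa [Finset.card_univ, ZMod.card] at this
  have h2A : 2 ≤ A.card := by omega
  rcases Nat.lt_or_ge A.card n with hlt | hge
  swap
  · exfalso
    have hAe : Finset.univ \ A = ∅ := by
      rw [← Finset.card_eq_zero, Finset.card_sdiff_of_subset (Finset.subset_univ _), Finset.card_univ,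
        ZMod.card]
      omega
    rcases hA.2 with hc | hc | ⟨c₁, c₂, hne, _⟩
    · rw [hAe] at hc; simp at hc
    · rw [hAe, Finset.card_empty] at hc; omega
    · obtain ⟨v, _⟩ := c₁.exists_rep
      exact Finset.eq_empty_iff_forall_notMem.mp hAe ↑v (Finset.mem_coe.mp v.2)
  rcases Nat.lt_or_ge A.card (n-1) with hlt2 | hge2
  · obtain ⟨s, p, g1, q, g2, hp, hg1, hq, hg2, hsum', hb1, hb2, hb3, hb4, hpq, hAeq⟩ :=
      goodSet_structure hA h2A (by omega)
    rcases Nat.lt_or_ge ℓ₁ 2 with hl1 | hl1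
    · rcases Nat.lt_or_ge ℓ₂ 2 with hl2 | hl2
      · refine ⟨arc s p, arc (s + ((p+g1:ℕ) : ZMod n)) q, twoArcs_disjoint (p := p) (g1 := g1) (q := q) (g2 := g2) (by omega) s,
          hAeq.symm, ?_, ?_, ?_, ?_⟩
        · rw [show p = 1 by omega, arc_one]; exact good_singleton _
        · rw [show q = 1 by omega, arc_one]; exact good_singleton _
        · rw [card_arc (by omega)]; omega
        · rw [card_arc (by omega)]; omega
      · obtain ⟨A1, A2, hd, hu, hg1', hg2', hc1, hc2⟩ :=
          split_one s hAeq (by omega) hp hg1 hq hg2 hb1 hb2 hb3 hb4 (by omega)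
        exact ⟨A1, A2, hd, hu, hg1', hg2', by omega, by omega⟩
    · rcases Nat.lt_or_ge ℓ₂ 2 with hl2 | hl2
      · obtain ⟨A1, A2, hd, hu, hg1', hg2', hc1, hc2⟩ :=
          split_one s hAeq (by omega) hp hg1 hq hg2 hb1 hb2 hb3 hb4 (by omega)
        exact ⟨A2, A1, hd.symm, by rw [Finset.union_comm]; exact hu, hg2', hg1',
          by omega, by omega⟩
      · obtain ⟨c1, d1, hcd, h1c, h1d, hcp, hdq, bb1, bb2, bb3, bb4, bb5, bb6, bb7, bb8⟩ :=
          split_arith p q g1 g2 ℓ₁ ℓ₂ (by omega) hb1 hb2 hb3 hb4 hl1 hl2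
        obtain ⟨A1, A2, hd, hu, hgg1, hgg2, hc1, hc2⟩ :=
          split_main s hAeq hsum' hg1 hg2 h1c h1d hcp hdq bb1 bb2 bb3 bb4 bb5 bb6 bb7 bb8
        rcases hcd with hcd | hcd
        · exact ⟨A1, A2, hd, hu, hgg1, hgg2, by omega, by omega⟩
        · exact ⟨A2, A1, hd.symm, by rw [Finset.union_comm]; exact hu, hgg2, hgg1,
            by omega, by omega⟩
  · have hcard : A.card = n - 1 := by omega
    have hcompl : (Finset.univ \ A).card = 1 := by
      rw [Finset.card_sdiff_of_subset (Finset.subset_univ _), Finset.card_univ, ZMod.card]; omega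
    obtain ⟨x, hxe⟩ := Finset.card_eq_one.mp hcompl
    have hx : x ∉ A := by
      have hm : x ∈ Finset.univ \ A := by rw [hxe]; exact Finset.mem_singleton_self x
      exact (Finset.mem_sdiff.mp hm).2
    have hn1 : ℓ₁ + ℓ₂ + 1 = n := by omega
    have hkey : ∀ v : ZMod n, (v - (x+1)).val < ℓ₁ + ℓ₂ ↔ v ≠ x := by
      intro v
      have hvlt := ZMod.val_lt (v - (x+1))
      have hcast : ((ℓ₁+ℓ₂+1 : ℕ) : ZMod n) = 0 := by rw [hn1, ZMod.natCast_self]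
      have hiff : v = x ↔ (v - (x+1)).val = ℓ₁ + ℓ₂ := by
        constructor
        · intro hvx
          rw [hvx]
          have hxx : x - (x+1) = ((ℓ₁+ℓ₂ : ℕ) : ZMod n) := by
            push_cast at hcast ⊢
            linear_combination -hcast
          rw [hxx, ZMod.val_natCast_of_lt (by omega)]
        · intro h
          have hvv : v - (x+1) = ((ℓ₁+ℓ₂ : ℕ) : ZMod n) := by rw [← h, natCast_val_self]
          push_cast at hcast hvv
          linear_combination hvv + hcast
      constructor
      · intro h hvx; rw [hiff.mp hvx] at h; omega
      · intro h; rcases Nat.lt_or_ge ((v-(x+1)).val) (ℓ₁+ℓ₂) with h' | h'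
        · exact h'
        · exact absurd (hiff.mpr (by omega)) h
    have hAeq : A = arc (x+1) (ℓ₁+ℓ₂) := by
      ext v
      rw [mem_arc_iff (by omega), hkey]
      constructor
      · intro hv hvx; exact hx (hvx ▸ hv)
      · intro hv
        by_contra hvA
        have hm : v ∈ Finset.univ \ A := Finset.mem_sdiff.mpr ⟨Finset.mem_univ _, hvA⟩
        rw [hxe, Finset.mem_singleton] at hm
        exact hv hm
    obtain ⟨A1, A2, hd, hu, hgg1, hgg2, hc1, hc2⟩ := arc_split (x+1) ℓ₁ ℓ₂ h₁ h₂ hn1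
    exact ⟨A1, A2, hd, by rw [hu, hAeq], hgg1, hgg2, hc1, hc2⟩
end

section
/- Suppose 2 ≤ k ≤ n are integers. A surjective function f : V(P_n) → {1,...,k} is a k-color weak maximizer of the Wiener index W on P_n if and only if it is a k-color local weak maximizer of W on P_n. -/
open SimpleGraph Finset

/-!
On the path, `W(f) = ∑ᵥ β_f(v) · v`, where the balance `β_f(v)` is the number of vertices of
the colour of `v` to its left minus the number to its right. In a class of size `m` these
balances are `2j - m + 1` for `j < m`, so the multiset of values of `β_f` depends only on
`type(f)`. Swapping the colours of adjacent vertices `u, u + 1` of different colours changes `W`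
by `β_f(u) - β_f(u + 1)`, while `β_f(u) < β_f(u + 1)` when they share a colour. Hence at a local
weak maximizer `β_f` is nondecreasing along the path, and by the rearrangement inequality `f`
maximizes `∑ᵥ β(v) · v` over all rearrangements `β` of `β_f`, in particular over all colourings
of the same type.
-/

theorem colorType_comp_perm {V : Type*} [Fintype V] {k : ℕ} (f : V → Fin k)
    (σ : Equiv.Perm V) :
    colorType (f ∘ σ) = colorType f := by
  refine Multiset.map_congr rfl fun i _ => ?_
  rw [← card_map σ.toEmbedding]
  congr 1
  ext v
  simp [colorClass, mem_map_equiv]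

lemma colorClass_eq_of_mem {V : Type*} [Fintype V] {k : ℕ} {f : V → Fin k} {i : Fin k} {v : V}
    (hv : v ∈ colorClass f i) : colorClass f (f v) = colorClass f i := by
  rw [(mem_filter.mp hv).2]

theorem IsWeakMaximizer.isLocalWeakMaximizer {V : Type*} [Fintype V] [DecidableEq V] {k : ℕ}
    {G : SimpleGraph V} {f : V → Fin k} (hf : IsWeakMaximizer G f) : IsLocalWeakMaximizer G f :=
  ⟨hf.1, fun u v _ => hf.2 _ (hf.1.comp (Equiv.swap u v).surjective) (colorType_comp_perm f _)⟩

lemma Int.sign_sub_eq_ite (a b : ℤ) :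
    (a - b).sign = if b < a then 1 else if a < b then -1 else 0 := by
  split_ifs
  · exact Int.sign_eq_one_of_pos (by omega)
  · exact Int.sign_eq_neg_one_of_neg (by omega)
  · rw [show a - b = 0 by omega, Int.sign_zero]

theorem Finset.sum_sum_abs_sub {ι : Type*} (s : Finset ι) (x : ι → ℤ) :
    ∑ a ∈ s, ∑ b ∈ s, |x a - x b| = 2 * ∑ a ∈ s, (∑ b ∈ s, (x a - x b).sign) * x a := by
  have hsplit : ∀ a b, |x a - x b| = (x a - x b).sign * x a + (x b - x a).sign * x b := by
    intro a b
    rw [← Int.sign_mul_self_eq_abs, ← neg_sub, Int.sign_neg]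
    ring
  simp_rw [hsplit, sum_add_distrib, sum_comm (γ := ι) (f := fun a b => (x b - x a).sign * x b),
    sum_mul]
  ring

def balancePattern (m : ℕ) : Multiset ℤ :=
  (Multiset.range m).map fun j : ℕ => 2 * (j : ℤ) - m + 1

lemma balancePattern_succ (m : ℕ) :
    balancePattern (m + 1) = (m : ℤ) ::ₘ (balancePattern m).map (· - 1) := by
  rw [balancePattern, balancePattern, Multiset.range_succ, Multiset.map_cons, Multiset.map_map]
  congr 1
  · push_cast; ring
  · exact Multiset.map_congr rfl fun j _ => by simp only [Function.comp_apply]; push_cast; ring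

theorem Finset.map_sum_sign_sub_eq_balancePattern {α : Type*} [LinearOrder α] (s : Finset α)
    {x : α → ℤ} (hx : StrictMono x) :
    s.val.map (fun a => ∑ b ∈ s, (x a - x b).sign) = balancePattern s.card := by
  induction s using Finset.induction_on_max with
  | empty => rfl
  | insert a s ha ih =>
    have has : a ∉ s := fun h => lt_irrefl a (ha a h)
    rw [insert_val_of_notMem has, Multiset.map_cons, card_insert_of_notMem has,
      balancePattern_succ, ← ih, Multiset.map_map]
    congr 1
    · rw [sum_insert has, sub_self, Int.sign_zero, zero_add,
        sum_congr rfl fun b hb => Int.sign_eq_one_of_pos (sub_pos.2 (hx (ha b hb)))]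
      simp
    · refine Multiset.map_congr rfl fun b hb => ?_
      rw [Function.comp_apply, sum_insert has,
        Int.sign_eq_neg_one_of_neg (sub_neg.2 (hx (ha b hb)))]
      ring

namespace SimpleGraph

variable {n : ℕ}

lemma pathGraph_abs_sub_le_length {u v : Fin n} (w : (pathGraph n).Walk u v) :
    |(u : ℤ) - v| ≤ w.length := by
  induction w with
  | nil => simp
  | cons h _ ih =>
    rw [pathGraph_adj] at h
    rw [Walk.length_cons, abs_le] at *
    omega

lemma pathGraph_dist_le_of_val_add_eq {u v : Fin n} {d : ℕ} (h : u.val + d = v.val) :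
    (pathGraph n).dist u v ≤ d := by
  induction d generalizing u with
  | zero => rw [Fin.ext (by omega : u.val = v.val), dist_self]
  | succ d ih =>
    let u' : Fin n := ⟨u.val + 1, by omega⟩
    have hadj : (pathGraph n).Adj u u' := pathGraph_adj.mpr (Or.inl rfl)
    obtain ⟨w, hw⟩ := ((pathGraph_preconnected n) u' v).exists_walk_length_eq_dist
    calc (pathGraph n).dist u v ≤ (Walk.cons hadj w).length := dist_le _
      _ ≤ d + 1 := by
        rw [Walk.length_cons, hw]
        exact Nat.add_le_add_right (ih (by simp [u']; omega)) 1

theorem pathGraph_dist (u v : Fin n) : ((pathGraph n).dist u v : ℤ) = |(u : ℤ) - v| := by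
  refine le_antisymm ?_ ?_
  · wlog huv : u ≤ v generalizing u v
    · rw [dist_comm, abs_sub_comm]
      exact this v u (le_of_not_ge huv)
    have := pathGraph_dist_le_of_val_add_eq (d := v.val - u.val) (by omega : u.val + _ = v.val)
    rw [abs_of_nonpos (by omega)]
    omega
  · obtain ⟨w, hw⟩ := ((pathGraph_preconnected n) u v).exists_walk_length_eq_dist
    exact hw ▸ pathGraph_abs_sub_le_length w

end SimpleGraph

section PathColoring

variable {n k : ℕ}

theorem wienerSet_pathGraph (A : Finset (Fin n)) :
    (wienerSet (pathGraph n) A : ℤ) = ∑ a ∈ A, (∑ b ∈ A, ((a : ℤ) - b).sign) * a := by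
  have hsum : ((∑ p ∈ A.offDiag, (pathGraph n).dist p.1 p.2 : ℕ) : ℤ)
      = 2 * ∑ a ∈ A, (∑ b ∈ A, ((a : ℤ) - b).sign) * a := by
    rw [← sum_sum_abs_sub, ← sum_product (f := fun p : Fin n × Fin n => |(p.1 : ℤ) - p.2|),
      Nat.cast_sum]
    simp_rw [pathGraph_dist]
    refine sum_subset (fun p hp => ?_) fun p hp hoff => ?_
    · simp_all
    · have hdiag : p.1 = p.2 := by simp_all
      simp [hdiag]
  rw [wienerSet, Int.natCast_div, hsum]
  simp

-- The paper's `l_f(v) - r_f(v)`, i.e. `leftCount f v - rightCount f v`.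
def colorBalance (f : Fin n → Fin k) (v : Fin n) : ℤ :=
  ∑ w ∈ colorClass f (f v), ((v : ℤ) - w).sign

theorem wienerColoring_pathGraph (f : Fin n → Fin k) :
    (wienerColoring (pathGraph n) f : ℤ) = ∑ v, colorBalance f v * v := by
  rw [wienerColoring, Nat.cast_sum, ← sum_fiberwise univ f]
  refine sum_congr rfl fun i _ => ?_
  rw [wienerSet_pathGraph]
  exact sum_congr rfl fun v hv => by rw [colorBalance, colorClass_eq_of_mem hv]

lemma colorBalance_eq_sum_ite (f : Fin n → Fin k) (v : Fin n) :
    colorBalance f v = ∑ w, if f w = f v then ((v : ℤ) - w).sign else 0 := by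
  rw [colorBalance, colorClass, sum_filter]

section Swap

variable {f : Fin n → Fin k} {u v : Fin n}

theorem colorBalance_swapColors (huv : u.val + 1 = v.val) (hne : f u ≠ f v) (w : Fin n) :
    colorBalance (swapColors f u v) w = colorBalance f (Equiv.swap u v w) := by
  rw [colorBalance_eq_sum_ite, colorBalance_eq_sum_ite]
  refine Fintype.sum_equiv (Equiv.swap u v) _ _ fun y => ?_
  by_cases hc : f (Equiv.swap u v y) = f (Equiv.swap u v w)
  · rw [if_pos (show swapColors f u v y = swapColors f u v w from hc), if_pos hc,
      Int.sign_sub_eq_ite, Int.sign_sub_eq_ite]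
    -- The swap of adjacent `u`, `v` preserves the order of every pair but `{u, v}`, whose two
    -- vertices have different colours.
    simp only [Equiv.swap_apply_def] at hc ⊢
    split_ifs at hc ⊢ <;> simp only [Fin.ext_iff, ne_eq] at * <;> omega
  · rw [if_neg (show ¬swapColors f u v y = swapColors f u v w from hc), if_neg hc]

theorem wienerColoring_swapColors_sub (huv : u.val + 1 = v.val) (hne : f u ≠ f v) :
    (wienerColoring (pathGraph n) (swapColors f u v) : ℤ) - wienerColoring (pathGraph n) f
      = colorBalance f u - colorBalance f v := by
  have huv' : u ≠ v := fun h => by rw [h] at huv; omega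
  rw [wienerColoring_pathGraph, wienerColoring_pathGraph]
  simp_rw [colorBalance_swapColors huv hne]
  rw [← Equiv.sum_comp (Equiv.swap u v), ← sum_sub_distrib]
  simp only [Equiv.swap_apply_self]
  rw [Fintype.sum_eq_add u v huv' fun w ⟨hwu, hwv⟩ => by
    rw [Equiv.swap_apply_of_ne_of_ne hwu hwv, sub_self]]
  simp only [Equiv.swap_apply_left, Equiv.swap_apply_right]
  push_cast [← huv]
  ring

theorem colorBalance_le_of_val_add_one_eq (hloc : IsLocalWeakMaximizer (pathGraph n) f)
    (huv : u.val + 1 = v.val) : colorBalance f u ≤ colorBalance f v := by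
  by_cases hc : f u = f v
  · rw [colorBalance, colorBalance, hc]
    refine sum_le_sum fun w _ => ?_
    rw [Int.sign_sub_eq_ite, Int.sign_sub_eq_ite]
    split_ifs <;> omega
  · have := hloc.2 u v (pathGraph_adj.mpr (Or.inl huv))
    have := wienerColoring_swapColors_sub huv hc
    omega

end Swap

theorem monotone_colorBalance {f : Fin n → Fin k} (hloc : IsLocalWeakMaximizer (pathGraph n) f) :
    Monotone (colorBalance f) := by
  cases n with
  | zero => exact fun a => a.elim0
  | succ n =>
    exact Fin.monotone_iff_le_succ.2 fun i => colorBalance_le_of_val_add_one_eq hloc (by simp)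

theorem map_colorBalance_colorClass (f : Fin n → Fin k) (i : Fin k) :
    (colorClass f i).val.map (colorBalance f) = balancePattern (colorClass f i).card := by
  rw [← (colorClass f i).map_sum_sign_sub_eq_balancePattern (x := fun v => (v : ℤ))
    (Nat.strictMono_cast.comp Fin.val_strictMono)]
  exact Multiset.map_congr rfl fun v hv => by rw [colorBalance, colorClass_eq_of_mem hv]

theorem card_colorBalance_eq (f : Fin n → Fin k) (z : ℤ) :
    #{v | colorBalance f v = z} = ((colorType f).map fun m => (balancePattern m).count z).sum := by
  rw [card_eq_sum_card_fiberwise (f := f) (t := univ) fun _ _ => mem_univ _, colorType,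
    Multiset.map_map, ← sum_eq_multiset_sum]
  refine sum_congr rfl fun i _ => ?_
  rw [Function.comp_apply, ← map_colorBalance_colorClass, Multiset.count_map, ← filter_val]
  simp only [colorClass, filter_filter, filter_val, eq_comm, and_comm]
  rfl

theorem exists_perm_colorBalance_eq {f g : Fin n → Fin k} (hct : colorType g = colorType f) :
    ∃ σ : Equiv.Perm (Fin n), ∀ v, colorBalance f (σ v) = colorBalance g v := by
  have hfib (z : ℤ) : Fintype.card {v // colorBalance g v = z}
      = Fintype.card {v // colorBalance f v = z} := by
    rw [Fintype.card_subtype, Fintype.card_subtype, card_colorBalance_eq, card_colorBalance_eq, hct]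
  exact ⟨Equiv.ofFiberEquiv fun z => Fintype.equivOfCardEq (hfib z), Equiv.ofFiberEquiv_map _⟩

theorem wienerColoring_le_of_isLocalWeakMaximizer {f g : Fin n → Fin k}
    (hloc : IsLocalWeakMaximizer (pathGraph n) f) (hct : colorType g = colorType f) :
    wienerColoring (pathGraph n) g ≤ wienerColoring (pathGraph n) f := by
  obtain ⟨σ, hσ⟩ := exists_perm_colorBalance_eq hct
  have hmv : Monovary (colorBalance f) (fun v : Fin n => (v : ℤ)) :=
    (monotone_colorBalance hloc).monovary (Nat.mono_cast.comp Fin.val_strictMono.monotone)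
  rw [← Nat.cast_le (α := ℤ), wienerColoring_pathGraph, wienerColoring_pathGraph]
  simpa only [hσ] using hmv.sum_comp_perm_mul_le_sum_mul (σ := σ)

end PathColoring

theorem path_weakMaximizer_iff_localWeakMaximizer_general (n k : ℕ) (f : Fin n → Fin k) :
    IsWeakMaximizer (SimpleGraph.pathGraph n) f ↔
      IsLocalWeakMaximizer (SimpleGraph.pathGraph n) f :=
  ⟨IsWeakMaximizer.isLocalWeakMaximizer,
    fun hloc => ⟨hloc.1, fun _ _ hct => wienerColoring_le_of_isLocalWeakMaximizer hloc hct⟩⟩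

/-- For `2 ≤ k ≤ n`, a surjective `f : V(P_n) → {1,…,k}` is a `k`-color weak maximizer of
`W` on `P_n` iff it is a `k`-color local weak maximizer of `W` on `P_n`. -/
theorem path_weakMaximizer_iff_localWeakMaximizer (n k : ℕ) (hk : 2 ≤ k) (hkn : k ≤ n)
    (f : Fin n → Fin k) (hf : Function.Surjective f) :
    IsWeakMaximizer (SimpleGraph.pathGraph n) f ↔
      IsLocalWeakMaximizer (SimpleGraph.pathGraph n) f :=
  path_weakMaximizer_iff_localWeakMaximizer_general n k f
end
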